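/- arXiv:1903.03753 — 7 statements merged into one kernel-verified Lean document; each statement's English description precedes it below -/
import Mathlib

section
/- In the F^α-scheme, the probability that the n-th observation is a record equals α_n / s_n, where s_n = α_1 + ... + α_n. That is, if X_1, ..., X_n are independent real random variables with X_k having distribution function F^{α_k} for a common continuous distribution function F and positive reals α_k, then P(X_n > max(X_1, ..., X_{n-1})) = α_n / (α_1 + ... + α_n). -/
/-!
Conditionally on `X n = x`, the record event has probability
`∏_{j<n} F x ^ α j = G x ^ (β / α n)`, where `β = ∑_{j<n} α j` and `G = F ^ α n` is the
continuous distribution function of `X n`. By the probability integral transform `G (X n)` is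
uniform on `(0, 1]`, so the probability is `∫₀¹ u ^ (β / α n) du = α n / (α n + β)`.
-/

open MeasureTheory ProbabilityTheory Filter Set Topology

namespace ProbabilityTheory

variable {μ : Measure ℝ} [IsProbabilityMeasure μ]

theorem measure_singleton_eq_zero_of_continuous_cdf (hμ : Continuous (cdf μ)) (x : ℝ) :
    μ {x} = 0 := by
  rw [← measure_cdf μ, StieltjesFunction.measure_singleton,
    hμ.continuousWithinAt.leftLim_eq, sub_self, ENNReal.ofReal_zero]

theorem measure_Iio_eq_ofReal_cdf (hμ : Continuous (cdf μ)) (x : ℝ) :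
    μ (Iio x) = ENNReal.ofReal (cdf μ x) := by
  rw [measure_congr (Iio_ae_eq_Iic' (measure_singleton_eq_zero_of_continuous_cdf hμ x)),
    ofReal_cdf]

theorem measure_setOf_cdf_le (hμ : Continuous (cdf μ)) {t : ℝ} (ht₀ : 0 ≤ t) (ht₁ : t < 1) :
    μ {x | cdf μ x ≤ t} = ENNReal.ofReal t := by
  set S := {x | cdf μ x ≤ t}
  rcases S.eq_empty_or_nonempty with hS | hS
  · obtain rfl : t = 0 := by
      refine ht₀.eq_or_lt.elim Eq.symm fun ht ↦ ?_
      obtain ⟨x, hx⟩ := ((tendsto_cdf_atBot μ).eventually_lt_const ht).exists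
      exact absurd (hS.subset hx.le) (by simp)
    simp [hS]
  have hbdd : BddAbove S := by
    obtain ⟨b, hb⟩ := ((tendsto_cdf_atTop μ).eventually_const_lt ht₁).exists_forall_of_atTop
    exact ⟨b, fun x hx ↦ not_lt.1 fun hbx ↦ (hb x hbx.le).not_ge hx⟩
  have haS : sSup S ∈ S := (isClosed_le hμ continuous_const).csSup_mem hS hbdd
  have hSIic : S = Iic (sSup S) :=
    Subset.antisymm (fun x hx ↦ le_csSup hbdd hx) fun x hx ↦ (monotone_cdf μ hx).trans haS
  have hcdf : cdf μ (sSup S) = t := by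
    refine le_antisymm haS (not_lt.1 fun hlt ↦ ?_)
    obtain ⟨x, hxt, hx⟩ := ((((hμ.tendsto _).mono_left nhdsWithin_le_nhds).eventually
      (gt_mem_nhds hlt)).and self_mem_nhdsWithin : ∀ᶠ x in 𝓝[>] sSup S, _ ∧ _).exists
    exact (le_csSup hbdd (le_of_lt hxt)).not_gt hx
  rw [hSIic, ← ofReal_cdf, hcdf]

theorem map_cdf_eq_volume_restrict_Ioc (hμ : Continuous (cdf μ)) :
    μ.map (cdf μ) = volume.restrict (Ioc 0 1) := by
  refine Measure.ext_of_Iic _ _ fun t ↦ ?_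
  rw [Measure.map_apply hμ.measurable measurableSet_Iic,
    Measure.restrict_apply measurableSet_Iic, inter_comm, Ioc_inter_Iic]
  rcases lt_or_ge t 0 with ht₀ | ht₀
  · have : cdf μ ⁻¹' Iic t = ∅ :=
      eq_empty_of_forall_notMem fun x hx ↦ (ht₀.trans_le (cdf_nonneg μ x)).not_ge hx
    simp [this, ht₀.le]
  rcases lt_or_ge t 1 with ht₁ | ht₁
  · rw [inf_eq_right.2 ht₁.le, Real.volume_Ioc, sub_zero]
    exact measure_setOf_cdf_le hμ ht₀ ht₁
  · have : cdf μ ⁻¹' Iic t = univ :=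
      eq_univ_of_forall fun x ↦ (cdf_le_one μ x).trans ht₁
    simp [this, ht₁]

theorem lintegral_cdf_rpow (hμ : Continuous (cdf μ)) {r : ℝ} (hr : 0 ≤ r) :
    ∫⁻ x, ENNReal.ofReal (cdf μ x ^ r) ∂μ = ENNReal.ofReal (r + 1)⁻¹ := by
  have hpow : Continuous fun u : ℝ ↦ u ^ r := continuous_id.rpow_const fun _ ↦ Or.inr hr
  rw [← lintegral_map (f := fun u ↦ ENNReal.ofReal (u ^ r)) (by fun_prop) hμ.measurable,
    map_cdf_eq_volume_restrict_Ioc hμ,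
    ← ofReal_integral_eq_lintegral_ofReal, ← intervalIntegral.integral_of_le zero_le_one,
    integral_rpow (Or.inl (by linarith)), Real.one_rpow, Real.zero_rpow (by positivity)]
  · simp
  · exact hpow.integrableOn_Ioc
  · filter_upwards [ae_restrict_mem measurableSet_Ioc] with u hu
    exact Real.rpow_nonneg hu.1.le r

variable {Ω : Type*} [MeasurableSpace Ω] {P : Measure Ω}

theorem IndepFun.measure_preimage_prodMk_eq_lintegral {β γ : Type*} [MeasurableSpace β]
    [MeasurableSpace γ] [IsFiniteMeasure P] {f : Ω → β} {g : Ω → γ} (hfg : IndepFun f g P)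
    (hf : Measurable f) (hg : Measurable g) {S : Set (β × γ)} (hS : MeasurableSet S) :
    P ((fun ω ↦ (f ω, g ω)) ⁻¹' S) = ∫⁻ y, P (g ⁻¹' (Prod.mk y ⁻¹' S)) ∂(P.map f) := by
  rw [← Measure.map_apply (hf.prodMk hg) hS,
    hfg.map_prod_eq_prod_map_map hf.aemeasurable hg.aemeasurable, Measure.prod_apply hS]
  simp_rw [Measure.map_apply hg (measurable_prodMk_left hS)]

theorem iIndepFun.measure_forall_lt_eq_lintegral {ι : Type*} [IsProbabilityMeasure P]
    {X : ι → Ω → ℝ} (hindep : iIndepFun X P) (hX : ∀ i, Measurable (X i))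
    {s : Finset ι} {i : ι} (hi : i ∉ s) :
    P {ω | ∀ j ∈ s, X j ω < X i ω} = ∫⁻ x, ∏ j ∈ s, P (X j ⁻¹' Iio x) ∂(P.map (X i)) := by
  have hind : IndepFun (X i) (fun ω (j : s) ↦ X j ω) P := by
    exact (hindep.indepFun_finset {i} s (Finset.disjoint_singleton_left.2 hi) hX).comp
      (measurable_pi_apply ⟨i, Finset.mem_singleton_self i⟩) measurable_id
  have hS : MeasurableSet {p : ℝ × (s → ℝ) | ∀ j, p.2 j < p.1} := by
    simp only [ofPred_forall]
    exact MeasurableSet.iInter fun j ↦ measurableSet_lt (by fun_prop) (by fun_prop)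
  have hsec (x : ℝ) : (fun ω (j : s) ↦ X j ω) ⁻¹' (Prod.mk x ⁻¹' {p | ∀ j, p.2 j < p.1})
      = ⋂ j ∈ s, X j ⁻¹' Iio x := by
    ext ω; simp
  convert hind.measure_preimage_prodMk_eq_lintegral (hX i) (by fun_prop) hS using 2
  · ext ω; simp
  · funext x
    rw [hsec, hindep.measure_inter_preimage_eq_mul s fun _ _ ↦ measurableSet_Iio]

end ProbabilityTheory

theorem falpha_record_probability_general
    {Ω : Type*} [MeasurableSpace Ω] (P : Measure Ω) [IsProbabilityMeasure P]
    (F : ℝ → ℝ) (hFmono : Monotone F) (hFcont : Continuous F)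
    (hF0 : Tendsto F atBot (nhds 0))
    (α : ℕ → ℝ) (hα : ∀ k, 0 < α k)
    (X : ℕ → Ω → ℝ) (hX : ∀ k, Measurable (X k))
    (hindep : iIndepFun X P)
    (hdist : ∀ k x, (P {ω | X k ω ≤ x}).toReal = F x ^ α k)
    (n : ℕ) :
    (P {ω | ∀ j < n, X j ω < X n ω}).toReal
      = α n / ∑ k ∈ Finset.range (n + 1), α k := by
  have hF_nonneg (x : ℝ) : 0 ≤ F x :=
    le_of_tendsto hF0 (eventually_atBot.2 ⟨x, fun _ hy ↦ hFmono hy⟩)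
  have (k : ℕ) : IsProbabilityMeasure (P.map (X k)) :=
    Measure.isProbabilityMeasure_map (hX k).aemeasurable
  have hcdf (k : ℕ) : cdf (P.map (X k)) = fun x ↦ F x ^ α k := by
    ext x
    rw [cdf_eq_real, map_measureReal_apply (hX k) measurableSet_Iic]
    exact hdist k x
  have hcont (k : ℕ) : Continuous (cdf (P.map (X k))) := by
    rw [hcdf]
    exact hFcont.rpow_const fun _ ↦ Or.inr (hα k).le
  set β := ∑ j ∈ Finset.range n, α j
  have hr : 0 ≤ β / α n := div_nonneg (Finset.sum_nonneg fun j _ ↦ (hα j).le) (hα n).le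
  have hprod (x : ℝ) : ∏ j ∈ Finset.range n, P (X j ⁻¹' Iio x)
      = ENNReal.ofReal (cdf (P.map (X n)) x ^ (β / α n)) := by
    simp_rw [← Measure.map_apply (hX _) measurableSet_Iio, measure_Iio_eq_ofReal_cdf (hcont _),
      hcdf, ← ENNReal.ofReal_prod_of_nonneg fun j _ ↦ Real.rpow_nonneg (hF_nonneg x) _,
      ← Real.rpow_sum_of_nonneg (hF_nonneg x) fun j _ ↦ (hα j).le,
      ← Real.rpow_mul (hF_nonneg x), mul_div_cancel₀ _ (hα n).ne', β]
  have hrecord : {ω | ∀ j < n, X j ω < X n ω} = {ω | ∀ j ∈ Finset.range n, X j ω < X n ω} := by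
    simp only [Finset.mem_range]
  rw [hrecord, hindep.measure_forall_lt_eq_lintegral hX Finset.notMem_range_self,
    lintegral_congr fun x ↦ hprod x, lintegral_cdf_rpow (hcont n) hr,
    ENNReal.toReal_ofReal (inv_nonneg.2 (by linarith)), Finset.sum_range_succ]
  field_simp [(hα n).ne']
  ring

/-- In the `F^α`-scheme, the probability that the `n`-th observation is a record
equals `α n / s n` with `s n = α 0 + ... + α n` (0-based indexing). -/
theorem falpha_record_probability
    {Ω : Type*} [MeasurableSpace Ω] (P : Measure Ω) [IsProbabilityMeasure P]
    (F : ℝ → ℝ) (hFmono : Monotone F) (hFcont : Continuous F)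
    (hF0 : Tendsto F atBot (nhds 0)) (hF1 : Tendsto F atTop (nhds 1))
    (α : ℕ → ℝ) (hα : ∀ k, 0 < α k)
    (X : ℕ → Ω → ℝ) (hX : ∀ k, Measurable (X k))
    (hindep : iIndepFun X P)
    (hdist : ∀ k x, (P {ω | X k ω ≤ x}).toReal = F x ^ α k)
    (n : ℕ) :
    (P {ω | ∀ j < n, X j ω < X n ω}).toReal
      = α n / ∑ k ∈ Finset.range (n + 1), α k :=
  falpha_record_probability_general P F hFmono hFcont hF0 α hα X hX hindep hdist n
end

section
/- In the F^α-scheme, the record indicators are jointly independent: if X_1, ..., X_n are independent with X_k having distribution function F^{α_k} for a common continuous F, and I_k = 1 when X_k > max(X_1,...,X_{k-1}) (I_1 = 1), then the events {I_1 = 1}, ..., {I_n = 1} are jointly independent. -/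
/-!
Put `Y k = F ∘ X k`. Since `F` is continuous, `Y k` has distribution function `t ^ α k` on
`[0, 1]`; the `Y k` are independent, ties among them have probability zero, and so the record
events of `X` and of `Y` agree almost surely. With `S m = α 0 + ⋯ + α m`, induction on `m` gives,
for `T ⊆ {0, …, m}`,
  `P(every k ∈ T is a record, max_{j ≤ m} Y j ≤ t) = ∏_{k ∈ T} (α k / S k) · t ^ S m`:
by independence of `Y (m + 1)` from the past, the new index adds a factor `t ^ α (m + 1)` if it
is not required to be a record, and otherwise integrates `t ^ a - u ^ a` (`a = α (m + 1)`)
against the law `c · d(u ^ S m)` of the past maximum, giving `c · a / (S m + a) · t ^ (S m + a)`.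
Taking `t = 1` yields the product formula for the record events.
-/

open MeasureTheory ProbabilityTheory Filter Set

noncomputable section

def powerCDF (S t : ℝ) : ℝ := (projIcc (0 : ℝ) 1 zero_le_one t : ℝ) ^ S

lemma powerCDF_nonneg (S t : ℝ) : 0 ≤ powerCDF S t :=
  Real.rpow_nonneg (projIcc (0 : ℝ) 1 zero_le_one t).2.1 S

lemma powerCDF_of_nonpos {S t : ℝ} (hS : S ≠ 0) (ht : t ≤ 0) : powerCDF S t = 0 := by
  simp [powerCDF, projIcc_of_le_left _ ht, Real.zero_rpow hS]

lemma powerCDF_of_mem {S t : ℝ} (ht : t ∈ Icc 0 1) : powerCDF S t = t ^ S := by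
  simp [powerCDF, projIcc_of_mem _ ht]

lemma powerCDF_of_one_le {S t : ℝ} (ht : 1 ≤ t) : powerCDF S t = 1 := by
  simp [powerCDF, projIcc_of_right_le _ ht]

lemma monotone_powerCDF {S : ℝ} (hS : 0 ≤ S) : Monotone (powerCDF S) := fun _ _ h =>
  Real.rpow_le_rpow (projIcc (0 : ℝ) 1 zero_le_one _).2.1 (monotone_projIcc _ h) hS

lemma continuous_powerCDF {S : ℝ} (hS : 0 < S) : Continuous (powerCDF S) :=
  (continuous_subtype_val.comp continuous_projIcc).rpow_const fun _ => Or.inr hS.le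

lemma powerCDF_add {S a : ℝ} (hSa : S + a ≠ 0) (t : ℝ) :
    powerCDF (S + a) t = powerCDF S t * powerCDF a t :=
  Real.rpow_add' (projIcc (0 : ℝ) 1 zero_le_one t).2.1 hSa

lemma Ioc_zero_one_inter_Iic (t : ℝ) :
    Ioc 0 1 ∩ Iic t = Ioc 0 (projIcc (0 : ℝ) 1 zero_le_one t : ℝ) := by
  ext u
  rcases le_total t 0 with ht | ht
  · simp only [projIcc_of_le_left _ ht, mem_inter_iff, mem_Iic, mem_Ioc]
    exact ⟨fun h => by linarith [h.1.1, h.2], fun h => by linarith [h.1, h.2]⟩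
  rcases le_total 1 t with ht' | ht'
  · simp only [projIcc_of_right_le _ ht', mem_inter_iff, mem_Iic, mem_Ioc]
    exact ⟨fun h => h.1, fun h => ⟨h, h.2.trans ht'⟩⟩
  · simp only [projIcc_of_mem _ ⟨ht, ht'⟩, mem_inter_iff, mem_Iic, mem_Ioc]
    exact ⟨fun h => ⟨h.1.1, h.2⟩, fun h => ⟨⟨h.1, h.2.trans ht'⟩, h.2⟩⟩

lemma integrableOn_Ioc_rpow {r b : ℝ} (hr : -1 < r) (hb : 0 ≤ b) :
    IntegrableOn (fun u : ℝ => u ^ r) (Ioc 0 b) := by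
  simpa [intervalIntegrable_iff_integrableOn_Ioc_of_le hb] using
    intervalIntegral.intervalIntegrable_rpow' (a := 0) (b := b) hr

lemma integral_Ioc_mul_rpow_sub_one {c r b : ℝ} (hr : 0 < r) (hb : 0 ≤ b) :
    ∫ u in Ioc 0 b, c * u ^ (r - 1) = c / r * b ^ r := by
  rw [← intervalIntegral.integral_of_le hb, intervalIntegral.integral_const_mul,
    integral_rpow (Or.inl (by linarith)), sub_add_cancel, Real.zero_rpow hr.ne']
  ring

/-- The law with distribution function `t ^ S` on `[0, 1]`: that of `F (X)` when `X` has the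
continuous distribution function `F ^ S`. -/
def powerLaw (S : ℝ) : Measure ℝ :=
  volume.withDensity ((Ioc 0 1).indicator fun u => ENNReal.ofReal (S * u ^ (S - 1)))

lemma lintegral_powerLaw (S : ℝ) {f : ℝ → ENNReal} (hf : Measurable f) :
    ∫⁻ u, f u ∂powerLaw S = ∫⁻ u in Ioc 0 1, ENNReal.ofReal (S * u ^ (S - 1)) * f u := by
  have hdens : Measurable fun u : ℝ => ENNReal.ofReal (S * u ^ (S - 1)) := by fun_prop
  rw [powerLaw, lintegral_withDensity_eq_lintegral_mul _ (hdens.indicator measurableSet_Ioc) hf,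
    ← lintegral_indicator measurableSet_Ioc]
  congr 1
  ext u
  by_cases hu : u ∈ Ioc (0 : ℝ) 1 <;> simp [hu]

lemma powerLaw_Iic {S : ℝ} (hS : 0 < S) (t : ℝ) :
    powerLaw S (Iic t) = ENNReal.ofReal (powerCDF S t) := by
  have hb := (projIcc (0 : ℝ) 1 zero_le_one t).2.1
  rw [powerLaw, withDensity_apply _ measurableSet_Iic, setLIntegral_indicator measurableSet_Ioc,
    Ioc_zero_one_inter_Iic, ← ofReal_integral_eq_lintegral_ofReal,
    integral_Ioc_mul_rpow_sub_one hS hb, div_self hS.ne', one_mul, powerCDF]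
  · exact (integrableOn_Ioc_rpow (by linarith) hb).const_mul S
  · filter_upwards [ae_restrict_mem measurableSet_Ioc] with u hu
    have := Real.rpow_nonneg hu.1.le (S - 1)
    positivity

lemma powerLaw_singleton (S x : ℝ) : powerLaw S {x} = 0 :=
  withDensity_absolutelyContinuous _ _ (measure_singleton x)

lemma powerLaw_Ioc {a : ℝ} (ha : 0 < a) (u t : ℝ) :
    powerLaw a (Ioc u t) = ENNReal.ofReal (powerCDF a t - powerCDF a u) := by
  rcases le_total u t with hut | htu
  · rw [← Iic_sdiff_Iic, measure_sdiff (Iic_subset_Iic.2 hut) nullMeasurableSet_Iic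
      (by simp [powerLaw_Iic ha]), powerLaw_Iic ha, powerLaw_Iic ha,
      ENNReal.ofReal_sub _ (powerCDF_nonneg a u)]
  · rw [Ioc_eq_empty_of_le htu, measure_empty, eq_comm, ENNReal.ofReal_eq_zero, sub_nonpos]
    exact monotone_powerCDF ha.le htu

lemma lintegral_Ioc_mul_rpow_mul_sub {S a T : ℝ} (hS : 0 < S) (ha : 0 < a) (hT : 0 ≤ T) :
    ∫⁻ u in Ioc 0 T, ENNReal.ofReal (S * u ^ (S - 1) * (T ^ a - u ^ a)) =
      ENNReal.ofReal (a / (S + a) * T ^ (S + a)) := by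
  have hsplit : EqOn (fun u => S * T ^ a * u ^ (S - 1) - S * u ^ (S + a - 1))
      (fun u => S * u ^ (S - 1) * (T ^ a - u ^ a)) (Ioc 0 T) := fun u hu => by
    simp only [show S + a - 1 = S - 1 + a by ring, Real.rpow_add hu.1]
    ring
  have hint : ∀ r : ℝ, 0 < r → ∀ c, IntegrableOn (fun u : ℝ => c * u ^ (r - 1)) (Ioc 0 T) :=
    fun r hr c => (integrableOn_Ioc_rpow (r := r - 1) (by linarith) hT).const_mul c
  have hSa := add_pos hS ha
  rw [← ofReal_integral_eq_lintegral_ofReal, ← setIntegral_congr_fun measurableSet_Ioc hsplit,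
    integral_sub (hint S hS _) (hint (S + a) hSa _), integral_Ioc_mul_rpow_sub_one hS hT,
    integral_Ioc_mul_rpow_sub_one hSa hT, Real.rpow_add' hT hSa.ne']
  · congr 1
    field_simp
    ring
  · exact ((hint S hS _).sub (hint (S + a) hSa _)).congr_fun hsplit measurableSet_Ioc
  · filter_upwards [ae_restrict_mem measurableSet_Ioc] with u hu
    have := Real.rpow_nonneg hu.1.le (S - 1)
    have := sub_nonneg.2 (Real.rpow_le_rpow hu.1.le hu.2 ha.le)
    simp only [Pi.zero_apply]
    positivity

lemma lintegral_powerLaw_Ioc {S a : ℝ} (hS : 0 < S) (ha : 0 < a) (t : ℝ) :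
    ∫⁻ u, powerLaw a (Ioc u t) ∂powerLaw S = ENNReal.ofReal (a / (S + a) * powerCDF (S + a) t) := by
  set T : ℝ := (projIcc (0 : ℝ) 1 zero_le_one t : ℝ)
  have hT : T ∈ Icc (0 : ℝ) 1 := (projIcc (0 : ℝ) 1 zero_le_one t).2
  have hcdf : ∀ u ∈ Ioc (0 : ℝ) 1, powerCDF a u = u ^ a := fun u hu =>
    powerCDF_of_mem ⟨hu.1.le, hu.2⟩
  simp_rw [powerLaw_Ioc ha]
  rw [lintegral_powerLaw S ((continuous_powerCDF ha).measurable.const_sub _).ennreal_ofReal,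
    ← Ioc_union_Ioc_eq_Ioc hT.1 hT.2,
    lintegral_union measurableSet_Ioc (Ioc_disjoint_Ioc_of_le le_rfl)]
  have hbelow : EqOn
      (fun u => ENNReal.ofReal (S * u ^ (S - 1)) * ENNReal.ofReal (powerCDF a t - powerCDF a u))
      (fun u => ENNReal.ofReal (S * u ^ (S - 1) * (T ^ a - u ^ a))) (Ioc 0 T) := fun u hu => by
    have := Real.rpow_nonneg hu.1.le (S - 1)
    simp only [show powerCDF a t = T ^ a from rfl, hcdf u ⟨hu.1, hu.2.trans hT.2⟩,
      ← ENNReal.ofReal_mul (by positivity : 0 ≤ S * u ^ (S - 1))]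
  have hbeyond : EqOn
      (fun u => ENNReal.ofReal (S * u ^ (S - 1)) * ENNReal.ofReal (powerCDF a t - powerCDF a u))
      0 (Ioc T 1) := fun u hu => by
    have : powerCDF a t ≤ powerCDF a u := by
      rw [hcdf u ⟨hT.1.trans_lt hu.1, hu.2⟩]
      exact Real.rpow_le_rpow hT.1 hu.1.le ha.le
    simp [ENNReal.ofReal_eq_zero.2 (sub_nonpos.2 this)]
  rw [setLIntegral_congr_fun measurableSet_Ioc hbelow,
    setLIntegral_eq_zero measurableSet_Ioc hbeyond, add_zero,
    lintegral_Ioc_mul_rpow_mul_sub hS ha hT.1]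
  rfl

lemma Monotone.exists_preimage_Iic_eq_Iic {F : ℝ → ℝ} (hmono : Monotone F) (hcont : Continuous F)
    (hF1 : Tendsto F atTop (nhds 1)) {t : ℝ} (ht : t < 1) (hne : (F ⁻¹' Iic t).Nonempty) :
    ∃ b, F ⁻¹' Iic t = Iic b ∧ F b = t := by
  obtain ⟨c, hc⟩ := (hF1.eventually (lt_mem_nhds ht)).exists
  have hbdd : BddAbove (F ⁻¹' Iic t) :=
    ⟨c, fun x hx => le_of_not_gt fun hcx => (hc.trans_le (hmono hcx.le)).not_ge hx⟩
  set b := sSup (F ⁻¹' Iic t)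
  have hFb : F b ≤ t := (isClosed_Iic.preimage hcont).csSup_mem hne hbdd
  refine ⟨b, Subset.antisymm (fun x hx => le_csSup hbdd hx) fun x hx => (hmono hx).trans hFb, ?_⟩
  refine hFb.antisymm (not_lt.1 fun hlt => ?_)
  obtain ⟨x, hxt, hbx⟩ := (((hcont.tendsto b).eventually (gt_mem_nhds hlt)).filter_mono
    nhdsWithin_le_nhds |>.and self_mem_nhdsWithin : ∀ᶠ x in nhdsWithin b (Ioi b), _).exists
  exact (le_csSup hbdd (show x ∈ F ⁻¹' Iic t from hxt.le)).not_gt hbx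

lemma map_eq_powerLaw {F : ℝ → ℝ} (hmono : Monotone F) (hcont : Continuous F)
    (hF0 : Tendsto F atBot (nhds 0)) (hF1 : Tendsto F atTop (nhds 1)) {a : ℝ} (ha : 0 < a)
    {μ : Measure ℝ} [IsProbabilityMeasure μ] (hμ : ∀ x, μ (Iic x) = ENNReal.ofReal (F x ^ a)) :
    μ.map F = powerLaw a := by
  refine Measure.ext_of_Iic _ _ fun t => ?_
  rw [Measure.map_apply hcont.measurable measurableSet_Iic, powerLaw_Iic ha]
  rcases le_or_gt 1 t with ht1 | ht1
  · have : F ⁻¹' Iic t = univ := eq_univ_of_forall fun x => (hmono.ge_of_tendsto hF1 x).trans ht1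
    rw [this, measure_univ, powerCDF_of_one_le ht1, ENNReal.ofReal_one]
  rcases (F ⁻¹' Iic t).eq_empty_or_nonempty with hempty | hne
  · have ht0 : t ≤ 0 := ge_of_tendsto hF0 (Eventually.of_forall fun x =>
      le_of_lt (not_le.1 fun hx => hempty.subset hx))
    rw [hempty, measure_empty, powerCDF_of_nonpos ha.ne' ht0, ENNReal.ofReal_zero]
  · obtain ⟨b, hb, hFb⟩ := hmono.exists_preimage_Iic_eq_Iic hcont hF1 ht1 hne
    rw [hb, hμ, hFb, powerCDF_of_mem ⟨hFb ▸ hmono.le_of_tendsto hF0 b, ht1.le⟩]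

namespace ProbabilityTheory

section Independence

variable {Ω β : Type*} [MeasurableSpace Ω] [MeasurableSpace β] {P : Measure Ω}
  {Z : Ω → β} {W : Ω → ℝ}

lemma IndepFun.measure_preimage_eq_lintegral [IsFiniteMeasure P] (h : IndepFun Z W P)
    (hZ : Measurable Z) (hW : Measurable W) {C : Set (β × ℝ)} (hC : MeasurableSet C) :
    P ((fun ω => (Z ω, W ω)) ⁻¹' C) = ∫⁻ z, P.map W (Prod.mk z ⁻¹' C) ∂P.map Z := by
  rw [← Measure.map_apply (hZ.prodMk hW) hC,
    (indepFun_iff_map_prod_eq_prod_map_map hZ.aemeasurable hW.aemeasurable).1 h,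
    Measure.prod_apply hC]

lemma IndepFun.measure_eq_eq_zero [IsFiniteMeasure P] {U : Ω → ℝ} (h : IndepFun U W P)
    (hU : Measurable U) (hW : Measurable W) (hatom : ∀ x, P.map W {x} = 0) :
    P {ω | U ω = W ω} = 0 := by
  rw [show {ω | U ω = W ω} = (fun ω => (U ω, W ω)) ⁻¹' diagonal ℝ from rfl,
    h.measure_preimage_eq_lintegral hU hW measurableSet_diagonal]
  simp [preimage, hatom]

variable {E : Set β} {g : β → ℝ} {c S a : ℝ}

lemma IndepFun.measure_le_and_le_eq (h : IndepFun Z W P) (hW : Measurable W)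
    (hE : MeasurableSet E) (hg : Measurable g) (ha : 0 < a) (hSa : S + a ≠ 0) (hc : 0 ≤ c)
    (hlaw : P.map W = powerLaw a)
    (hpast : ∀ u, P {ω | Z ω ∈ E ∧ g (Z ω) ≤ u} = ENNReal.ofReal (c * powerCDF S u)) (t : ℝ) :
    P {ω | (Z ω ∈ E ∧ g (Z ω) ≤ t) ∧ W ω ≤ t} = ENNReal.ofReal (c * powerCDF (S + a) t) := by
  have hWt : P (W ⁻¹' Iic t) = ENNReal.ofReal (powerCDF a t) := by
    rw [← Measure.map_apply hW measurableSet_Iic, hlaw, powerLaw_Iic ha]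
  have hZt : P (Z ⁻¹' {z | z ∈ E ∧ g z ≤ t}) = ENNReal.ofReal (c * powerCDF S t) := hpast t
  rw [show {ω | (Z ω ∈ E ∧ g (Z ω) ≤ t) ∧ W ω ≤ t} = Z ⁻¹' {z | z ∈ E ∧ g z ≤ t} ∩ W ⁻¹' Iic t
      from rfl, h.measure_inter_preimage_eq_mul {z | z ∈ E ∧ g z ≤ t} _
      (hE.inter (measurableSet_le hg measurable_const)) measurableSet_Iic, hZt, hWt,
    ← ENNReal.ofReal_mul (by positivity [powerCDF_nonneg S t]), powerCDF_add hSa, mul_assoc]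

lemma IndepFun.measure_lt_and_le_eq [IsFiniteMeasure P] (h : IndepFun Z W P)
    (hZ : Measurable Z) (hW : Measurable W) (hE : MeasurableSet E) (hg : Measurable g)
    (hS : 0 < S) (ha : 0 < a) (hc : 0 ≤ c) (hlaw : P.map W = powerLaw a)
    (hpast : ∀ u, P {ω | Z ω ∈ E ∧ g (Z ω) ≤ u} = ENNReal.ofReal (c * powerCDF S u)) (t : ℝ) :
    P {ω | Z ω ∈ E ∧ g (Z ω) < W ω ∧ W ω ≤ t} =
      ENNReal.ofReal (c * (a / (S + a) * powerCDF (S + a) t)) := by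
  have hκ : ((P.map Z).restrict E).map g = ENNReal.ofReal c • powerLaw S := by
    refine Measure.ext_of_Iic _ _ fun u => ?_
    rw [Measure.map_apply hg measurableSet_Iic, Measure.restrict_apply (hg measurableSet_Iic),
      Measure.map_apply hZ ((hg measurableSet_Iic).inter hE), Measure.smul_apply, powerLaw_Iic hS,
      smul_eq_mul, ← ENNReal.ofReal_mul hc, ← hpast]
    congr 1
    ext ω
    exact and_comm
  have hslice : ∀ z, P.map W (Prod.mk z ⁻¹' {q : β × ℝ | q.1 ∈ E ∧ g q.1 < q.2 ∧ q.2 ≤ t}) =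
      E.indicator (fun z => powerLaw a (Ioc (g z) t)) z := by
    intro z
    by_cases hz : z ∈ E <;> simp [hz, hlaw, preimage, Ioc]
  have hmeas : Measurable fun u => powerLaw a (Ioc u t) := by
    simp_rw [powerLaw_Ioc ha]
    exact ((continuous_powerCDF ha).measurable.const_sub _).ennreal_ofReal
  rw [show {ω | Z ω ∈ E ∧ g (Z ω) < W ω ∧ W ω ≤ t} =
      (fun ω => (Z ω, W ω)) ⁻¹' {q : β × ℝ | q.1 ∈ E ∧ g q.1 < q.2 ∧ q.2 ≤ t} from rfl,
    h.measure_preimage_eq_lintegral hZ hW, lintegral_congr hslice, lintegral_indicator hE,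
    ← lintegral_map hmeas hg, hκ, lintegral_smul_measure, lintegral_powerLaw_Ioc hS ha,
    smul_eq_mul, ← ENNReal.ofReal_mul hc]
  exact (measurable_fst hE).inter
    ((measurableSet_lt (hg.comp measurable_fst) measurable_snd).inter
      (measurableSet_le measurable_snd measurable_const))

end Independence

lemma iIndepSet.congr_ae {ι Ω : Type*} [MeasurableSpace Ω] {μ : Measure Ω}
    [IsZeroOrProbabilityMeasure μ] {s t : ι → Set Ω} (h : iIndepSet s μ)
    (hs : ∀ i, MeasurableSet (s i)) (ht : ∀ i, MeasurableSet (t i)) (hst : ∀ i, s i =ᵐ[μ] t i) :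
    iIndepSet t μ := by
  rw [iIndepSet_iff_meas_biInter hs] at h
  rw [iIndepSet_iff_meas_biInter ht]
  intro S
  have hS : (⋂ i ∈ S, s i) =ᵐ[μ] ⋂ i ∈ S, t i := by
    simpa only [Finset.mem_coe] using EventuallyEq.biInter S.finite_toSet fun i _ => hst i
  rw [← measure_congr hS, h S]
  exact Finset.prod_congr rfl fun i _ => measure_congr (hst i)

end ProbabilityTheory

def IsRecord (y : ℕ → ℝ) (k : ℕ) : Prop := ∀ j < k, y j < y k

/-- Packs the past `Y 0, …, Y m` of a process into one random variable, independent of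
`Y (m + 1)`. -/
def truncate (m : ℕ) (y : ℕ → ℝ) : ℕ → ℝ := fun j => y (min j m)

def runMax (y : ℕ → ℝ) (m : ℕ) : ℝ := (Finset.range (m + 1)).sup' Finset.nonempty_range_add_one y

section Records

variable {y : ℕ → ℝ} {m k : ℕ} {t : ℝ}

lemma isRecord_zero : IsRecord y 0 := fun _ hj => absurd hj (Nat.not_lt_zero _)

lemma runMax_zero : runMax y 0 = y 0 := by
  simp [runMax]

lemma runMax_le_iff : runMax y m ≤ t ↔ ∀ j ≤ m, y j ≤ t := by
  simp [runMax]

lemma runMax_lt_iff : runMax y m < t ↔ ∀ j ≤ m, y j < t := by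
  simp [runMax]

lemma isRecord_succ_iff : IsRecord y (m + 1) ↔ runMax y m < y (m + 1) := by
  simp [IsRecord, runMax_lt_iff]

lemma runMax_succ_le_iff : runMax y (m + 1) ≤ t ↔ runMax y m ≤ t ∧ y (m + 1) ≤ t := by
  rw [runMax_le_iff, runMax_le_iff]
  exact ⟨fun h => ⟨fun j hj => h j (Nat.le_succ_of_le hj), h _ le_rfl⟩,
    fun h j hj => (Nat.le_succ_iff.1 hj).elim (h.1 j) fun e => e ▸ h.2⟩

lemma runMax_truncate : runMax (truncate m y) m = runMax y m :=
  Finset.sup'_congr _ rfl fun j hj => by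
    show y (min j m) = y j
    rw [min_eq_left (Nat.lt_succ_iff.1 (Finset.mem_range.1 hj))]

lemma forall_isRecord_truncate_iff {T : Finset ℕ} (hT : T ⊆ Finset.range (m + 1)) :
    (∀ k ∈ T, IsRecord (truncate m y) k) ↔ ∀ k ∈ T, IsRecord y k := by
  refine forall₂_congr fun k hk => forall₂_congr fun j hj => ?_
  have hkm : k ≤ m := Nat.lt_succ_iff.1 (Finset.mem_range.1 (hT hk))
  show y (min j m) < y (min k m) ↔ _
  rw [min_eq_left (hj.le.trans hkm), min_eq_left hkm]

lemma measurableSet_isRecord (k : ℕ) : MeasurableSet {y : ℕ → ℝ | IsRecord y k} := by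
  simp only [IsRecord, ofPred_forall]
  exact MeasurableSet.iInter fun j => MeasurableSet.iInter fun _ =>
    measurableSet_lt (measurable_pi_apply j) (measurable_pi_apply k)

lemma forall_isRecord_iff_of_succ_mem {T : Finset ℕ} (hm : m + 1 ∈ T) :
    (∀ k ∈ T, IsRecord y k) ↔ (∀ k ∈ T.erase (m + 1), IsRecord y k) ∧ runMax y m < y (m + 1) := by
  conv_lhs => rw [← Finset.insert_erase hm]
  rw [Finset.forall_mem_insert, isRecord_succ_iff, and_comm]

lemma measurableSet_forall_isRecord (T : Finset ℕ) :
    MeasurableSet {y : ℕ → ℝ | ∀ k ∈ T, IsRecord y k} := by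
  simp only [ofPred_forall]
  exact .biInter T.countable_toSet fun k _ => measurableSet_isRecord k

lemma measurable_runMax (m : ℕ) : Measurable fun y : ℕ → ℝ => runMax y m :=
  Finset.measurable_range_sup'' fun j _ => measurable_pi_apply j

end Records

def recordProb (α : ℕ → ℝ) (k : ℕ) : ℝ := α k / ∑ j ∈ Finset.range (k + 1), α j

lemma recordProb_nonneg {α : ℕ → ℝ} (hα : ∀ k, 0 < α k) (k : ℕ) : 0 ≤ recordProb α k :=
  div_nonneg (hα k).le (Finset.sum_nonneg fun j _ => (hα j).le)

section RecordEvents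

variable {Ω : Type*} [MeasurableSpace Ω] {P : Measure Ω} {Y : ℕ → Ω → ℝ}

lemma ProbabilityTheory.iIndepFun.indepFun_truncate_succ (h : iIndepFun Y P)
    (hY : ∀ k, Measurable (Y k)) (m : ℕ) :
    IndepFun (fun ω => truncate m (Y · ω)) (Y (m + 1)) P := by
  have hφ : Measurable fun (v : Finset.range (m + 1) → ℝ) (j : ℕ) =>
      v ⟨min j m, Finset.mem_range.2 (Nat.lt_succ_of_le (min_le_right j m))⟩ := by fun_prop
  have hψ : Measurable fun (v : ({m + 1} : Finset ℕ) → ℝ) =>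
      v ⟨m + 1, Finset.mem_singleton_self _⟩ := measurable_pi_apply _
  exact (h.indepFun_finset (Finset.range (m + 1)) {m + 1} (by simp) hY).comp hφ hψ

variable {α : ℕ → ℝ}

theorem measure_isRecord_runMax_le_zero (hα : ∀ k, 0 < α k) (hY : ∀ k, Measurable (Y k))
    (hlaw : ∀ k, P.map (Y k) = powerLaw (α k)) {T : Finset ℕ} (hT : T ⊆ Finset.range 1) (t : ℝ) :
    P {ω | (∀ k ∈ T, IsRecord (Y · ω) k) ∧ runMax (Y · ω) 0 ≤ t} =
      ENNReal.ofReal ((∏ k ∈ T, recordProb α k) * powerCDF (∑ j ∈ Finset.range 1, α j) t) := by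
  have hT0 : ∀ k ∈ T, k = 0 := fun k hk => by simpa using hT hk
  have hT1 : ∏ k ∈ T, recordProb α k = 1 := Finset.prod_eq_one fun k hk => by
    simp [hT0 k hk, recordProb, (hα 0).ne']
  have hevent : {ω | (∀ k ∈ T, IsRecord (Y · ω) k) ∧ runMax (Y · ω) 0 ≤ t} = Y 0 ⁻¹' Iic t := by
    ext ω
    simp only [mem_ofPred_eq, runMax_zero, mem_preimage, mem_Iic, and_iff_right_iff_imp]
    exact fun _ k hk => hT0 k hk ▸ isRecord_zero
  rw [hevent, ← Measure.map_apply (hY 0) measurableSet_Iic, hlaw, powerLaw_Iic (hα 0), hT1,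
    one_mul, Finset.sum_range_one]

variable [IsProbabilityMeasure P]

theorem measure_isRecord_runMax_le_succ (hα : ∀ k, 0 < α k) (hY : ∀ k, Measurable (Y k))
    (hind : iIndepFun Y P) (hlaw : ∀ k, P.map (Y k) = powerLaw (α k)) {m : ℕ}
    (ih : ∀ T ⊆ Finset.range (m + 1), ∀ t,
      P {ω | (∀ k ∈ T, IsRecord (Y · ω) k) ∧ runMax (Y · ω) m ≤ t} =
        ENNReal.ofReal ((∏ k ∈ T, recordProb α k) * powerCDF (∑ j ∈ Finset.range (m + 1), α j) t))
    {T : Finset ℕ} (hT : T ⊆ Finset.range (m + 2)) (t : ℝ) :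
    P {ω | (∀ k ∈ T, IsRecord (Y · ω) k) ∧ runMax (Y · ω) (m + 1) ≤ t} =
      ENNReal.ofReal ((∏ k ∈ T, recordProb α k) *
        powerCDF (∑ j ∈ Finset.range (m + 2), α j) t) := by
  have hT' : T.erase (m + 1) ⊆ Finset.range (m + 1) := fun k hk => by
    have h1 := Finset.mem_range.1 (hT (Finset.mem_of_mem_erase hk))
    exact Finset.mem_range.2 (by have := Finset.ne_of_mem_erase hk; omega)
  set S := ∑ j ∈ Finset.range (m + 1), α j
  have hS : 0 < S := Finset.sum_pos (fun j _ => hα j) Finset.nonempty_range_add_one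
  have hSsucc : ∑ j ∈ Finset.range (m + 2), α j = S + α (m + 1) := Finset.sum_range_succ _ _
  set Z : Ω → ℕ → ℝ := fun ω => truncate m (Y · ω)
  set E := {y : ℕ → ℝ | ∀ k ∈ T.erase (m + 1), IsRecord y k}
  have hc : 0 ≤ ∏ k ∈ T.erase (m + 1), recordProb α k :=
    Finset.prod_nonneg fun k _ => recordProb_nonneg hα k
  have hIH : ∀ u, P {ω | Z ω ∈ E ∧ runMax (Z ω) m ≤ u} =
      ENNReal.ofReal ((∏ k ∈ T.erase (m + 1), recordProb α k) * powerCDF S u) := fun u => by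
    simpa only [Z, E, mem_ofPred_eq, forall_isRecord_truncate_iff hT', runMax_truncate] using
      ih _ hT' u
  have hindep := hind.indepFun_truncate_succ hY m
  by_cases hm : m + 1 ∈ T
  · have hevent : {ω | (∀ k ∈ T, IsRecord (Y · ω) k) ∧ runMax (Y · ω) (m + 1) ≤ t} =
        {ω | Z ω ∈ E ∧ runMax (Z ω) m < Y (m + 1) ω ∧ Y (m + 1) ω ≤ t} := by
      ext ω
      simp only [Z, E, mem_ofPred_eq, forall_isRecord_truncate_iff hT', runMax_truncate,
        runMax_succ_le_iff, forall_isRecord_iff_of_succ_mem hm]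
      exact ⟨fun ⟨⟨hE, hlt⟩, _, hW⟩ => ⟨hE, hlt, hW⟩,
        fun ⟨hE, hlt, hW⟩ => ⟨⟨hE, hlt⟩, hlt.le.trans hW, hW⟩⟩
    rw [hevent, hindep.measure_lt_and_le_eq (measurable_pi_lambda _ fun j => hY _) (hY _)
      (measurableSet_forall_isRecord _) (measurable_runMax m) hS (hα _) hc (hlaw _) hIH t,
      ← Finset.mul_prod_erase T _ hm, hSsucc, recordProb, hSsucc]
    ring_nf
  · rw [Finset.erase_eq_of_notMem hm] at hc hIH
    have hevent : {ω | (∀ k ∈ T, IsRecord (Y · ω) k) ∧ runMax (Y · ω) (m + 1) ≤ t} =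
        {ω | (Z ω ∈ E ∧ runMax (Z ω) m ≤ t) ∧ Y (m + 1) ω ≤ t} := by
      ext ω
      simp only [Z, E, mem_ofPred_eq, Finset.erase_eq_of_notMem hm,
        forall_isRecord_truncate_iff (Finset.erase_eq_of_notMem hm ▸ hT'), runMax_truncate,
        runMax_succ_le_iff, and_assoc]
    rw [hevent, hindep.measure_le_and_le_eq (hY _) (measurableSet_forall_isRecord _)
      (measurable_runMax m) (hα _) (add_pos hS (hα _)).ne' hc (hlaw _) hIH t, hSsucc]

theorem measure_isRecord_runMax_le (hα : ∀ k, 0 < α k) (hY : ∀ k, Measurable (Y k))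
    (hind : iIndepFun Y P) (hlaw : ∀ k, P.map (Y k) = powerLaw (α k)) (m : ℕ) {T : Finset ℕ}
    (hT : T ⊆ Finset.range (m + 1)) (t : ℝ) :
    P {ω | (∀ k ∈ T, IsRecord (Y · ω) k) ∧ runMax (Y · ω) m ≤ t} =
      ENNReal.ofReal ((∏ k ∈ T, recordProb α k) *
        powerCDF (∑ j ∈ Finset.range (m + 1), α j) t) := by
  induction m generalizing T t with
  | zero => exact measure_isRecord_runMax_le_zero hα hY hlaw hT t
  | succ m ih =>
    exact measure_isRecord_runMax_le_succ hα hY hind hlaw (fun T hT t => ih hT t) hT t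

theorem iIndepSet_isRecord (hα : ∀ k, 0 < α k) (hY : ∀ k, Measurable (Y k))
    (hind : iIndepFun Y P) (hlaw : ∀ k, P.map (Y k) = powerLaw (α k)) :
    iIndepSet (fun k => {ω | IsRecord (Y · ω) k}) P := by
  have hpath : Measurable fun ω k => Y k ω := measurable_pi_lambda _ hY
  have hinter : ∀ T : Finset ℕ,
      P (⋂ k ∈ T, {ω | IsRecord (Y · ω) k}) = ENNReal.ofReal (∏ k ∈ T, recordProb α k) := by
    intro T
    set m := T.sup id
    have hT : T ⊆ Finset.range (m + 1) := fun k hk =>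
      Finset.mem_range.2 (Nat.lt_succ_of_le (Finset.le_sup (f := id) hk))
    have hmax : MeasurableSet {ω | runMax (Y · ω) m ≤ 1} :=
      measurableSet_le ((measurable_runMax m).comp hpath) measurable_const
    have hbound : P {ω | runMax (Y · ω) m ≤ 1}ᶜ = 0 := by
      rw [prob_compl_eq_zero_iff hmax]
      simpa [powerCDF_of_one_le le_rfl] using
        measure_isRecord_runMax_le hα hY hind hlaw m (Finset.empty_subset _) 1
    have h := measure_isRecord_runMax_le hα hY hind hlaw m hT 1
    rw [powerCDF_of_one_le le_rfl, mul_one] at h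
    rw [← measure_inter_conull hbound, ← h]
    congr 1
    ext ω
    simp
  have hmeas : ∀ k, MeasurableSet {ω | IsRecord (Y · ω) k} := fun k =>
    hpath (measurableSet_isRecord k)
  rw [iIndepSet_iff_meas_biInter hmeas]
  intro T
  rw [hinter, ENNReal.ofReal_prod_of_nonneg fun k _ => recordProb_nonneg hα k]
  exact Finset.prod_congr rfl fun k _ => by simpa using (hinter {k}).symm

end RecordEvents

end

lemma isRecord_comp_ae_eq {Ω : Type*} [MeasurableSpace Ω] {P : Measure Ω} {X : ℕ → Ω → ℝ}
    {F : ℝ → ℝ} (hF : Monotone F) (hties : ∀ j k, j ≠ k → P {ω | F (X j ω) = F (X k ω)} = 0)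
    (k : ℕ) : {ω | IsRecord (fun j => F (X j ω)) k} =ᵐ[P] {ω | IsRecord (X · ω) k} := by
  have hdistinct : ∀ᵐ ω ∂P, ∀ j, j < k → F (X j ω) ≠ F (X k ω) := by
    refine ae_all_iff.2 fun j => ?_
    by_cases hjk : j < k
    · filter_upwards [measure_eq_zero_iff_ae_notMem.1 (hties j k hjk.ne)] with ω hω _ using hω
    · exact ae_of_all _ fun ω hj => absurd hj hjk
  filter_upwards [hdistinct] with ω hω
  exact propext ⟨fun h j hj => hF.reflect_lt (h j hj),
    fun h j hj => (hF (h j hj).le).lt_of_ne (hω j hj)⟩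

/-- In the `F^α`-scheme the record indicator events are jointly independent. -/
theorem falpha_record_indicators_independent
    {Ω : Type*} [MeasurableSpace Ω] (P : Measure Ω) [IsProbabilityMeasure P]
    (F : ℝ → ℝ) (hFmono : Monotone F) (hFcont : Continuous F)
    (hF0 : Tendsto F atBot (nhds 0)) (hF1 : Tendsto F atTop (nhds 1))
    (α : ℕ → ℝ) (hα : ∀ k, 0 < α k)
    (X : ℕ → Ω → ℝ) (hX : ∀ k, Measurable (X k))
    (hindep : iIndepFun X P)
    (hdist : ∀ k x, (P {ω | X k ω ≤ x}).toReal = F x ^ α k) :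
    iIndepSet (fun k : ℕ => {ω | ∀ j < k, X j ω < X k ω}) P := by
  have hY : ∀ k, Measurable fun ω => F (X k ω) := fun k => hFcont.measurable.comp (hX k)
  have hindY : iIndepFun (fun k ω => F (X k ω)) P :=
    hindep.comp (fun _ => F) fun _ => hFcont.measurable
  have hlaw : ∀ k, P.map (fun ω => F (X k ω)) = powerLaw (α k) := fun k => by
    have := Measure.isProbabilityMeasure_map (μ := P) (hX k).aemeasurable
    rw [← Function.comp_def, ← Measure.map_map hFcont.measurable (hX k)]
    refine map_eq_powerLaw hFmono hFcont hF0 hF1 (hα k) fun x => ?_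
    rw [Measure.map_apply (hX k) measurableSet_Iic, ← hdist k x,
      ENNReal.ofReal_toReal (measure_ne_top P _)]
    rfl
  have hties : ∀ j k, j ≠ k → P {ω | F (X j ω) = F (X k ω)} = 0 := fun j k hjk =>
    (hindY.indepFun hjk).measure_eq_eq_zero (hY j) (hY k) fun x => by
      rw [hlaw]
      exact powerLaw_singleton _ _
  exact (iIndepSet_isRecord hα hY hindY hlaw).congr_ae
    (fun k => measurable_pi_lambda _ hY (measurableSet_isRecord k))
    (fun k => measurable_pi_lambda _ hX (measurableSet_isRecord k))
    (isRecord_comp_ae_eq hFmono hties)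
end

section
/- Let {I_n} be independent Bernoulli random variables with P(I_n = 1) = p_n = α_n/s_n for positive α_n with s_n = Σ_{k≤n} α_k → ∞, and let N_n = Σ_{k≤n} I_k, E_n = Σ_{k≤n} p_k. Then N_n / E_n → 1 almost surely as n → ∞. -/
/-!
For a sum `N n` of independent `[0, 1]`-valued variables with mean `E n`, the variance of `N n` is
at most `E n`, so Chebyshev bounds `P(|N n - E n| ≥ ε E n)` by `1 / (ε² E n)`. Along the indices
`u j` at which `E` first exceeds `j²` these bounds are summable, and Borel–Cantelli gives
`N (u j) / E (u j) → 1` a.s. Because `N` and `E` are monotone and `E (u (j + 1)) / E (u j) → 1`,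
this passes to the whole sequence. For `p n = α n / s n` the divergence `E n → ∞` is the
Abel–Dini theorem: `∑_{n < k ≤ m} α k / s k ≥ 1 - s n / s m`.
-/

open MeasureTheory ProbabilityTheory Filter Set

open Finset in
theorem monotone_sum_range_succ_of_nonneg {f : ℕ → ℝ} (hf : 0 ≤ f) :
    Monotone fun n => ∑ k ∈ range (n + 1), f k :=
  fun _ _ h => sum_mono_set_of_nonneg hf (range_mono (by omega))

open Finset in
theorem one_sub_div_le_sum_Ico_div_partialSum {α : ℕ → ℝ} (hα : ∀ n, 0 < α n) {n m : ℕ}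
    (hnm : n ≤ m) :
    1 - (∑ k ∈ range (n + 1), α k) / ∑ k ∈ range (m + 1), α k
      ≤ ∑ k ∈ Ico (n + 1) (m + 1), α k / ∑ j ∈ range (k + 1), α j := by
  have hs_pos : ∀ k, 0 < ∑ j ∈ range (k + 1), α j :=
    fun k => sum_pos (fun j _ => hα j) nonempty_range_add_one
  calc 1 - (∑ k ∈ range (n + 1), α k) / ∑ k ∈ range (m + 1), α k
      = ∑ k ∈ Ico (n + 1) (m + 1), α k / ∑ j ∈ range (m + 1), α j := by
        rw [← sum_div, sum_Ico_eq_sub _ (by omega), sub_div, div_self (hs_pos m).ne']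
    _ ≤ _ := by
        refine sum_le_sum fun k hk => div_le_div_of_nonneg_left (hα k).le (hs_pos k) ?_
        exact monotone_sum_range_succ_of_nonneg (fun j => (hα j).le)
          (Nat.le_of_lt_succ (mem_Ico.1 hk).2)

open Finset in
theorem tendsto_sum_div_partialSum_atTop {α : ℕ → ℝ} (hα : ∀ n, 0 < α n)
    (hs : Tendsto (fun n => ∑ k ∈ range (n + 1), α k) atTop atTop) :
    Tendsto (fun n => ∑ k ∈ range (n + 1), α k / ∑ j ∈ range (k + 1), α j) atTop atTop := by
  set E := fun n => ∑ k ∈ range (n + 1), α k / ∑ j ∈ range (k + 1), α j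
  have hmono : Monotone E := monotone_sum_range_succ_of_nonneg fun k =>
    div_nonneg (hα k).le (sum_nonneg fun j _ => (hα j).le)
  rw [hmono.tendsto_atTop_atTop_iff]
  by_contra! ⟨b, hb⟩
  have hL := tendsto_atTop_ciSup hmono ⟨b, forall_mem_range.2 fun n => (hb n).le⟩
  set L := ⨆ n, E n
  -- the block sums `E m - E n` would tend to `L - E n`, yet they stay above `1 - s n / s m → 1`
  have hgap : ∀ n, E n ≤ L - 1 := fun n => by
    have hlow : Tendsto (fun m => 1 - (∑ k ∈ range (n + 1), α k) / ∑ k ∈ range (m + 1), α k)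
        atTop (nhds (1 - 0)) := tendsto_const_nhds.sub (tendsto_const_nhds.div_atTop hs)
    have := le_of_tendsto_of_tendsto hlow (hL.sub_const (E n)) <|
      eventually_atTop.2 ⟨n, fun m hm => by
        simpa [E, sum_Ico_eq_sub _ (Nat.succ_le_succ hm)] using
          one_sub_div_le_sum_Ico_div_partialSum hα hm⟩
    linarith
  have := le_of_tendsto' hL hgap
  linarith

theorem tendsto_div_of_monotone_of_tendsto_div_comp {N E : ℕ → ℝ} {u J : ℕ → ℕ} (hN : Monotone N)
    (hN0 : ∀ n, 0 ≤ N n) (hE : Monotone E) (hEpos : ∀ᶠ j in atTop, 0 < E (u j))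
    (hJ : Tendsto J atTop atTop) (hJu : ∀ᶠ n in atTop, u (J n) ≤ n ∧ n < u (J n + 1))
    (hratio : Tendsto (fun j => E (u (j + 1)) / E (u j)) atTop (nhds 1))
    (hsub : Tendsto (fun j => N (u j) / E (u j)) atTop (nhds 1)) :
    Tendsto (fun n => N n / E n) atTop (nhds 1) := by
  have hlow : Tendsto (fun j => N (u j) / E (u (j + 1))) atTop (nhds 1) := by
    have := hsub.div hratio one_ne_zero
    rw [div_one] at this
    refine this.congr' ?_
    filter_upwards [hEpos] with j hj
    rw [Pi.div_apply, div_div_div_cancel_right₀ hj.ne']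
  have hup : Tendsto (fun j => N (u (j + 1)) / E (u j)) atTop (nhds 1) := by
    have := ((tendsto_add_atTop_iff_nat 1).2 hsub).mul hratio
    rw [one_mul] at this
    refine this.congr' ?_
    filter_upwards [(tendsto_add_atTop_nat 1).eventually hEpos] with j hj
    rw [div_mul_div_cancel₀ hj.ne']
  refine tendsto_of_tendsto_of_tendsto_of_le_of_le' (hlow.comp hJ) (hup.comp hJ) ?_ ?_ <;>
    filter_upwards [hJu, hJ.eventually hEpos] with n ⟨hle, hlt⟩ hpos
  · exact div_le_div₀ (hN0 n) (hN hle) (hpos.trans_le (hE hle)) (hE hlt.le)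
  · exact div_le_div₀ (hN0 _) (hN hlt.le) hpos (hE hle)

theorem tendsto_quadratic_div_quadratic (a b c : ℝ) :
    Tendsto (fun j : ℕ => ((j : ℝ) ^ 2 + a * j + b) / ((j : ℝ) ^ 2 + c)) atTop (nhds 1) := by
  have hinv : Tendsto (fun j : ℕ => (j : ℝ)⁻¹) atTop (nhds 0) :=
    tendsto_inv_atTop_zero.comp tendsto_natCast_atTop_atTop
  have hnum := ((tendsto_const_nhds (x := (1 : ℝ))).add (hinv.const_mul a)).add
    ((hinv.pow 2).const_mul b)
  have hden := (tendsto_const_nhds (x := (1 : ℝ))).add ((hinv.pow 2).const_mul c)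
  have := hnum.div hden (by simp)
  simp only [mul_zero, add_zero, ne_eq, OfNat.ofNat_ne_zero, not_false_eq_true, zero_pow,
    div_one] at this
  refine this.congr' ?_
  filter_upwards [eventually_ne_atTop 0] with j hj
  rw [Pi.div_apply]
  field_simp

theorem tendsto_succ_div_of_sq_le_of_le_sq_add_one {a : ℕ → ℝ} (hlo : ∀ j : ℕ, (j : ℝ) ^ 2 ≤ a j)
    (hhi : ∀ j : ℕ, a j ≤ (j : ℝ) ^ 2 + 1) :
    Tendsto (fun j => a (j + 1) / a j) atTop (nhds 1) := by
  refine tendsto_of_tendsto_of_tendsto_of_le_of_le' (tendsto_quadratic_div_quadratic 2 1 1)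
    (tendsto_quadratic_div_quadratic 2 2 0) ?_ ?_ <;>
    filter_upwards [eventually_ne_atTop 0] with j hj
  · have := hlo (j + 1)
    push_cast at this
    exact div_le_div₀ (by nlinarith) (by linarith)
      ((by positivity : (0 : ℝ) < j ^ 2).trans_le (hlo j)) (hhi j)
  · have := hhi (j + 1)
    push_cast at this
    exact div_le_div₀ (by positivity) (by linarith) (by positivity) (by linarith [hlo j])

-- `0` when `E` never reaches `t`
noncomputable def hittingIndex (E : ℕ → ℝ) (t : ℝ) : ℕ := sInf {n | t ≤ E n}

section hittingIndex

variable {E : ℕ → ℝ}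

theorem le_apply_hittingIndex (hE : Tendsto E atTop atTop) (t : ℝ) :
    t ≤ E (hittingIndex E t) :=
  Nat.sInf_mem (hE.eventually_ge_atTop t).exists

theorem hittingIndex_le {t : ℝ} {n : ℕ} (h : t ≤ E n) : hittingIndex E t ≤ n :=
  Nat.sInf_le h

theorem lt_hittingIndex (hE : Tendsto E atTop atTop) (hmono : Monotone E) {t : ℝ} {n : ℕ}
    (h : E n < t) : n < hittingIndex E t := by
  by_contra! hle
  exact (le_apply_hittingIndex hE t |>.trans (hmono hle)).not_gt h

theorem apply_hittingIndex_le (hE0 : E 0 ≤ 1) (hstep : ∀ n, E (n + 1) ≤ E n + 1) {t : ℝ}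
    (ht : 0 ≤ t) : E (hittingIndex E t) ≤ t + 1 := by
  rcases h : hittingIndex E t with _ | m
  · linarith
  · have hm : ¬ t ≤ E m := Nat.notMem_of_lt_sInf (show m < hittingIndex E t by omega)
    linarith [hstep m]

theorem eventually_hittingIndex_floor_sqrt (hE : Tendsto E atTop atTop) (hmono : Monotone E) :
    ∀ᶠ n in atTop, hittingIndex E ((⌊√(E n)⌋₊ : ℝ) ^ 2) ≤ n ∧
      n < hittingIndex E (((⌊√(E n)⌋₊ + 1 : ℕ) : ℝ) ^ 2) := by
  filter_upwards [hE.eventually_ge_atTop 0] with n hn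
  have hsq := Real.sq_sqrt hn
  constructor
  · refine hittingIndex_le (le_of_le_of_eq ?_ hsq)
    gcongr
    exact Nat.floor_le (Real.sqrt_nonneg _)
  · refine lt_hittingIndex hE hmono (lt_of_eq_of_lt hsq.symm ?_)
    push_cast
    gcongr
    exact Nat.lt_floor_add_one _

end hittingIndex

theorem integral_eq_measureReal_of_zero_or_one {Ω : Type*} [MeasurableSpace Ω] {P : Measure Ω}
    {X : Ω → ℝ} (hX : Measurable X) (h01 : ∀ ω, X ω = 0 ∨ X ω = 1) :
    P[X] = P.real {ω | X ω = 1} := by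
  have hX_eq : X = {ω | X ω = 1}.indicator 1 := funext fun ω => by
    rcases h01 ω with h | h <;> simp [h]
  conv_lhs => rw [hX_eq]
  exact integral_indicator_one (hX (measurableSet_singleton 1))

section Probability

variable {Ω : Type*} [MeasurableSpace Ω] {P : Measure Ω} [IsProbabilityMeasure P]

theorem ae_eventually_abs_div_sub_one_lt {X : ℕ → Ω → ℝ} {m : ℕ → ℝ} (hX : ∀ j, MemLp (X j) 2 P)
    (hmean : ∀ j, P[X j] = m j) (hvar : ∀ j, variance (X j) P ≤ m j) (hpos : ∀ j, 0 < m j)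
    (hsum : Summable fun j => (m j)⁻¹) {ε : ℝ} (hε : 0 < ε) :
    ∀ᵐ ω ∂P, ∀ᶠ j in atTop, |X j ω / m j - 1| < ε := by
  have hcheb : ∀ j, P {ω | ε * m j ≤ |X j ω - m j|} ≤ ENNReal.ofReal ((ε ^ 2)⁻¹ * (m j)⁻¹) := by
    intro j
    have h := meas_ge_le_variance_div_sq (hX j) (mul_pos hε (hpos j))
    rw [hmean] at h
    refine h.trans (ENNReal.ofReal_le_ofReal ?_)
    calc variance (X j) P / (ε * m j) ^ 2 ≤ m j / (ε * m j) ^ 2 := by gcongr; exact hvar j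
      _ = (ε ^ 2)⁻¹ * (m j)⁻¹ := by field_simp [(hpos j).ne']
  have hfinite : ∑' j, P {ω | ε * m j ≤ |X j ω - m j|} ≠ ⊤ := by
    refine ne_top_of_le_ne_top ?_ (ENNReal.tsum_le_tsum hcheb)
    rw [← ENNReal.ofReal_tsum_of_nonneg (fun j => by have := hpos j; positivity)
      (hsum.mul_left _)]
    exact ENNReal.ofReal_ne_top
  filter_upwards [ae_eventually_notMem hfinite] with ω hω
  filter_upwards [hω] with j hj
  rw [div_sub_one (hpos j).ne', abs_div, abs_of_pos (hpos j), div_lt_iff₀ (hpos j)]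
  exact not_le.1 hj

theorem ae_tendsto_div_of_variance_le {X : ℕ → Ω → ℝ} {m : ℕ → ℝ} (hX : ∀ j, MemLp (X j) 2 P)
    (hmean : ∀ j, P[X j] = m j) (hvar : ∀ j, variance (X j) P ≤ m j) (hpos : ∀ j, 0 < m j)
    (hsum : Summable fun j => (m j)⁻¹) :
    ∀ᵐ ω ∂P, Tendsto (fun j => X j ω / m j) atTop (nhds 1) := by
  have h := ae_all_iff.2 fun k : ℕ =>
    ae_eventually_abs_div_sub_one_lt hX hmean hvar hpos hsum (Nat.one_div_pos_of_nat (n := k))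
  filter_upwards [h] with ω hω
  refine Metric.tendsto_nhds.2 fun ε hε => ?_
  obtain ⟨k, hk⟩ := exists_nat_one_div_lt hε
  exact (hω k).mono fun j hj => hj.trans hk

theorem memLp_of_mem_Icc {X : Ω → ℝ} (hX : Measurable X) (h01 : ∀ ω, X ω ∈ Icc 0 1)
    (p : ENNReal) : MemLp X p P :=
  .of_bound hX.aestronglyMeasurable 1 <| .of_forall fun ω => by
    rw [Real.norm_of_nonneg (h01 ω).1]; exact (h01 ω).2

theorem variance_le_integral_of_mem_Icc {X : Ω → ℝ} (hX : Measurable X)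
    (h01 : ∀ ω, X ω ∈ Icc 0 1) : variance X P ≤ P[X] := by
  refine (variance_le_expectation_sq hX.aestronglyMeasurable).trans <|
    integral_mono_of_nonneg (.of_forall fun ω => sq_nonneg (X ω))
      ((memLp_of_mem_Icc hX h01 1).integrable le_rfl) (.of_forall fun ω => ?_)
  simpa [sq] using mul_le_of_le_one_left (h01 ω).1 (h01 ω).2

theorem variance_sum_le_sum_integral_of_mem_Icc {X : ℕ → Ω → ℝ} (hX : ∀ n, Measurable (X n))
    (hindep : iIndepFun X P) (h01 : ∀ n ω, X n ω ∈ Icc 0 1) (s : Finset ℕ) :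
    variance (∑ k ∈ s, X k) P ≤ ∑ k ∈ s, P[X k] := by
  rw [IndepFun.variance_sum (fun k _ => memLp_of_mem_Icc (hX k) (h01 k) 2)
    (fun i _ j _ hij => hindep.indepFun hij)]
  exact Finset.sum_le_sum fun k _ => variance_le_integral_of_mem_Icc (hX k) (h01 k)

theorem integral_mem_Icc_of_mem_Icc {X : Ω → ℝ} (hX : Measurable X) (h01 : ∀ ω, X ω ∈ Icc 0 1) :
    P[X] ∈ Icc 0 1 :=
  ⟨integral_nonneg fun ω => (h01 ω).1,
    (integral_mono ((memLp_of_mem_Icc hX h01 1).integrable le_rfl) (integrable_const 1)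
      fun ω => (h01 ω).2).trans_eq (by simp)⟩

theorem ae_tendsto_sum_div_sum_integral_comp {X : ℕ → Ω → ℝ} (hX : ∀ n, Measurable (X n))
    (hindep : iIndepFun X P) (h01 : ∀ n ω, X n ω ∈ Icc 0 1) {v : ℕ → ℕ}
    (hv : ∀ j : ℕ, ((j : ℝ) + 1) ^ 2 ≤ ∑ k ∈ Finset.range (v j + 1), P[X k]) :
    ∀ᵐ ω ∂P, Tendsto (fun j => (∑ k ∈ Finset.range (v j + 1), X k ω) /
      ∑ k ∈ Finset.range (v j + 1), P[X k]) atTop (nhds 1) := by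
  have hpos j : 0 < ∑ k ∈ Finset.range (v j + 1), P[X k] :=
    (by positivity : (0 : ℝ) < ((j : ℝ) + 1) ^ 2).trans_le (hv j)
  have hsum : Summable fun j => (∑ k ∈ Finset.range (v j + 1), P[X k])⁻¹ := by
    refine .of_nonneg_of_le (fun j => (inv_pos.2 (hpos j)).le)
      (fun j => inv_anti₀ (by positivity) (hv j)) ?_
    exact_mod_cast (summable_nat_add_iff 1).2 (Real.summable_nat_pow_inv.2 one_lt_two)
  have h := ae_tendsto_div_of_variance_le (P := P)
    (X := fun j => ∑ k ∈ Finset.range (v j + 1), X k)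
    (fun j => memLp_finsetSum' _ fun k _ => memLp_of_mem_Icc (hX k) (h01 k) 2)
    (fun j => by
      simp_rw [Finset.sum_apply]
      exact integral_finsetSum _ fun k _ => (memLp_of_mem_Icc (hX k) (h01 k) 1).integrable le_rfl)
    (fun j => variance_sum_le_sum_integral_of_mem_Icc hX hindep h01 _) hpos hsum
  simpa only [Finset.sum_apply] using h

theorem ae_tendsto_sum_div_sum_integral {X : ℕ → Ω → ℝ} (hX : ∀ n, Measurable (X n))
    (hindep : iIndepFun X P) (h01 : ∀ n ω, X n ω ∈ Icc 0 1)
    (htop : Tendsto (fun n => ∑ k ∈ Finset.range (n + 1), P[X k]) atTop atTop) :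
    ∀ᵐ ω ∂P, Tendsto (fun n => (∑ k ∈ Finset.range (n + 1), X k ω) /
      ∑ k ∈ Finset.range (n + 1), P[X k]) atTop (nhds 1) := by
  set E := fun n => ∑ k ∈ Finset.range (n + 1), P[X k]
  have hEX k := integral_mem_Icc_of_mem_Icc (P := P) (hX k) (h01 k)
  have hEmono : Monotone E := monotone_sum_range_succ_of_nonneg fun k => (hEX k).1
  set u := fun j : ℕ => hittingIndex E ((j : ℝ) ^ 2)
  have hlo (j : ℕ) : (j : ℝ) ^ 2 ≤ E (u j) := le_apply_hittingIndex htop _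
  have hhi (j : ℕ) : E (u j) ≤ (j : ℝ) ^ 2 + 1 := by
    refine apply_hittingIndex_le (by simpa [E] using (hEX 0).2) (fun n => ?_) (sq_nonneg _)
    simpa [E, Finset.sum_range_succ _ (n + 1)] using (hEX (n + 1)).2
  have hsub := ae_tendsto_sum_div_sum_integral_comp hX hindep h01 (v := fun j => u (j + 1))
    fun j => by exact_mod_cast hlo (j + 1)
  filter_upwards [hsub] with ω hω
  exact tendsto_div_of_monotone_of_tendsto_div_comp
    (monotone_sum_range_succ_of_nonneg fun k => (h01 k ω).1)
    (fun n => Finset.sum_nonneg fun k _ => (h01 k ω).1) hEmono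
    ((eventually_ne_atTop 0).mono fun j hj => (by positivity : (0 : ℝ) < j ^ 2).trans_le (hlo j))
    (tendsto_nat_floor_atTop.comp (Real.tendsto_sqrt_atTop.comp htop))
    (eventually_hittingIndex_floor_sqrt htop hEmono)
    (tendsto_succ_div_of_sq_le_of_le_sq_add_one hlo hhi) ((tendsto_add_atTop_iff_nat 1).1 hω)

end Probability

/-- SLLN for the number of records in the `F^α`-scheme: `N n / E n → 1` a.s. -/
theorem records_slln
    {Ω : Type*} [MeasurableSpace Ω] (P : Measure Ω) [IsProbabilityMeasure P]
    (α : ℕ → ℝ) (hα : ∀ n, 0 < α n)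
    (hs : Tendsto (fun n => ∑ k ∈ Finset.range (n + 1), α k) atTop atTop)
    (I : ℕ → Ω → ℝ) (hI : ∀ n, Measurable (I n))
    (hindep : iIndepFun I P)
    (hber : ∀ n ω, I n ω = 0 ∨ I n ω = 1)
    (hp : ∀ n, (P {ω | I n ω = 1}).toReal
        = α n / ∑ k ∈ Finset.range (n + 1), α k) :
    ∀ᵐ ω ∂P, Tendsto
      (fun n => (∑ k ∈ Finset.range (n + 1), I k ω)
        / ∑ k ∈ Finset.range (n + 1), α k / ∑ j ∈ Finset.range (k + 1), α j)
      atTop (nhds 1) := by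
  have hmean n : P[I n] = α n / ∑ k ∈ Finset.range (n + 1), α k := by
    rw [integral_eq_measureReal_of_zero_or_one (hI n) (hber n), measureReal_def, hp]
  have h01 n ω : I n ω ∈ Icc 0 1 := by rcases hber n ω with h | h <;> simp [h]
  simp_rw [← hmean]
  refine ae_tendsto_sum_div_sum_integral hI hindep h01 ?_
  simpa only [hmean] using tendsto_sum_div_partialSum_atTop hα hs
end

section
/- If s_n = Σ_{k≤n} α_k → ∞ for positive α_n and p_n = α_n/s_n, then E_n = Σ_{k≤n} p_k → ∞ as n → ∞. -/
open Filter

/-- If `s n = Σ_{k ≤ n} α k → ∞` for positive `α`, then `E n = Σ_{k ≤ n} α k / s k → ∞`. -/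
theorem sum_ratio_tendsto_atTop
    (α : ℕ → ℝ) (hα : ∀ n, 0 < α n)
    (hs : Tendsto (fun n => ∑ k ∈ Finset.range (n + 1), α k) atTop atTop) :
    Tendsto (fun n => ∑ k ∈ Finset.range (n + 1),
      α k / ∑ j ∈ Finset.range (k + 1), α j) atTop atTop := by
  set s : ℕ → ℝ := fun n => ∑ k ∈ Finset.range (n + 1), α k with hsdef
  set E : ℕ → ℝ := fun n => ∑ k ∈ Finset.range (n + 1), α k / s k with hEdef
  have hspos : ∀ n, 0 < s n := fun n =>
    Finset.sum_pos (fun i _ => hα i) (Finset.nonempty_range_add_one)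
  have hsmono : Monotone s := by
    apply monotone_nat_of_le_succ
    intro n
    have : s (n + 1) = s n + α (n + 1) := Finset.sum_range_succ α (n + 1)
    rw [this]
    linarith [hα (n + 1)]
  have hEmono : Monotone E := by
    apply monotone_nat_of_le_succ
    intro n
    have : E (n + 1) = E n + α (n + 1) / s (n + 1) := Finset.sum_range_succ _ (n + 1)
    rw [this]
    have := div_pos (hα (n + 1)) (hspos (n + 1))
    linarith
  -- key step: from any m we can gain 1/2
  have step : ∀ m, ∃ n, m ≤ n ∧ E m + 1 / 2 ≤ E n := by
    intro m
    obtain ⟨n, hn1, hn2⟩ := ((hs.eventually_ge_atTop (2 * s m)).and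
      (eventually_ge_atTop m)).exists
    refine ⟨n, hn2, ?_⟩
    have hmn : m + 1 ≤ n + 1 := by omega
    have hsplitE : E m + ∑ k ∈ Finset.Ico (m + 1) (n + 1), α k / s k = E n := by
      have h := Finset.sum_Ico_consecutive (fun k => α k / s k) (Nat.zero_le (m + 1)) hmn
      simp only [hEdef, Finset.range_eq_Ico]
      exact h
    have hsplits : s m + ∑ k ∈ Finset.Ico (m + 1) (n + 1), α k = s n := by
      have h := Finset.sum_Ico_consecutive α (Nat.zero_le (m + 1)) hmn
      simp only [hsdef, Finset.range_eq_Ico]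
      exact h
    have hge : ∑ k ∈ Finset.Ico (m + 1) (n + 1), α k / s k
        ≥ (∑ k ∈ Finset.Ico (m + 1) (n + 1), α k) / s n := by
      rw [Finset.sum_div]
      apply Finset.sum_le_sum
      intro k hk
      rw [Finset.mem_Ico] at hk
      exact div_le_div_of_nonneg_left (hα k).le (hspos k)
        (hsmono (by omega : k ≤ n))
    have h1 : (∑ k ∈ Finset.Ico (m + 1) (n + 1), α k) / s n = 1 - s m / s n := by
      have h : ∑ k ∈ Finset.Ico (m + 1) (n + 1), α k = s n - s m := by linarith
      rw [h, sub_div, div_self (hspos n).ne']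
    have h2 : s m / s n ≤ 1 / 2 := by
      rw [div_le_div_iff₀ (hspos n) (by norm_num)]
      linarith
    rw [← hsplitE]
    rw [h1] at hge
    linarith
  -- unboundedness
  have unbdd : ∀ C : ℝ, ∃ n, C ≤ E n := by
    have key : ∀ j : ℕ, ∃ n, E 0 + j * (1 / 2) ≤ E n := by
      intro j
      induction j with
      | zero => exact ⟨0, by simp⟩
      | succ j ih =>
        obtain ⟨n, hn⟩ := ih
        obtain ⟨n', hn'1, hn'2⟩ := step n
        refine ⟨n', ?_⟩
        push_cast
        linarith
    intro C
    obtain ⟨j, hj⟩ := exists_nat_ge ((C - E 0) * 2)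
    obtain ⟨n, hn⟩ := key j
    refine ⟨n, ?_⟩
    have : C ≤ E 0 + j * (1 / 2) := by linarith
    linarith
  exact tendsto_atTop_atTop_of_monotone hEmono unbdd
end

section
/- Let {Y_n}_{n≥1} be i.i.d. real random variables with common distribution function F having no atom at its essential supremum (there is no x_0 with F(x_0−) < F(x_0) = 1), M_n = max(Y_1,...,Y_n), and let {b_n} be a non-decreasing real sequence. Then P(M_n > b_n for all sufficiently large n) is either 0 or 1. -/
open MeasureTheory ProbabilityTheory Filter Set

/-! A value that is never exceeded by the sequence would either lie in `{F = 1}`, which is null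
because `F` is right-continuous and has no jump at the left end of that set, or below a rational
`q` with `F q < 1`, and `Y j ≤ q` for all `j` has probability `lim F(q)^n = 0`. So almost surely
the running maximum keeps moving to later indices, and the event `{M n > b n eventually}`
coincides a.s. with the tail event `⋂ m, {eventually ∃ j ∈ [m, n], Y j > b n}`; Kolmogorov's
0–1 law finishes. -/

theorem StieltjesFunction.exists_rat_gt_lt (f : StieltjesFunction ℝ) {x c : ℝ} (h : f x < c) :
    ∃ q : ℚ, x < q ∧ f q < c := by
  have : Nonempty {r : ℚ // x < r} := let ⟨q, hq⟩ := exists_rat_gt x; ⟨⟨q, hq⟩⟩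
  rw [← f.iInf_rat_gt_eq x] at h
  obtain ⟨⟨q, hxq⟩, hq⟩ := exists_lt_of_ciInf_lt h
  exact ⟨q, hxq, hq⟩

theorem Finset.eventually_lt_sup'_range_iff {α : Type*} [LinearOrder α] {y b : ℕ → α}
    (hy : ∀ k, ∃ j, y k < y j) :
    (∀ᶠ n in atTop, b n < (Finset.range (n + 1)).sup' (by simp) y) ↔
      ∀ m, ∀ᶠ n in atTop, ∃ j, m ≤ j ∧ j ≤ n ∧ b n < y j := by
  refine ⟨fun h m => ?_, fun h => (h 0).mono fun n ⟨j, _, hjn, hj⟩ =>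
    hj.trans_le (Finset.le_sup' y (Finset.mem_range_succ_iff.2 hjn))⟩
  obtain ⟨k, -, hk⟩ := Finset.exists_mem_eq_sup' (Finset.nonempty_range_add_one (n := m)) y
  obtain ⟨j, hkj⟩ := hy k
  filter_upwards [h, eventually_ge_atTop j] with n hn hjn
  obtain ⟨i, hi, hni⟩ := Finset.exists_mem_eq_sup' Finset.nonempty_range_add_one y
  refine ⟨i, ?_, Finset.mem_range_succ_iff.1 hi, hni ▸ hn⟩
  by_contra! him
  have hji : y j ≤ y i := hni ▸ Finset.le_sup' y (Finset.mem_range_succ_iff.2 hjn)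
  have hik : y i ≤ y k := hk ▸ Finset.le_sup' y (Finset.mem_range_succ_iff.2 him.le)
  exact (hkj.trans_le (hji.trans hik)).false

theorem MeasurableSpace.measurableSet_limsup_iInter_of_antitone {Ω : Type*}
    {s : ℕ → MeasurableSpace Ω} {B : ℕ → Set Ω} (hB : Antitone B)
    (hBs : ∀ m, MeasurableSet[⨆ k ≥ m, s k] (B m)) :
    MeasurableSet[limsup s atTop] (⋂ m, B m) := by
  rw [limsup_eq_iInf_iSup_of_nat, MeasurableSpace.measurableSet_iInf]
  intro N
  rw [← hB.iInter_nat_add N]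
  refine MeasurableSet.iInter fun m => ?_
  have hle : (⨆ k ≥ m + N, s k) ≤ ⨆ k ≥ N, s k :=
    biSup_mono fun k hk => (Nat.le_add_left N m).trans hk
  exact hle _ (hBs (m + N))

theorem MeasurableSpace.measurableSet_biSup_comap_eventually_exists_mem {Ω β : Type*}
    [mβ : MeasurableSpace β] (Y : ℕ → Ω → β) {S : ℕ → Set β} (hS : ∀ n, MeasurableSet (S n))
    (m : ℕ) :
    MeasurableSet[⨆ k ≥ m, mβ.comap (Y k)]
      {ω | ∀ᶠ n in atTop, ∃ j, m ≤ j ∧ j ≤ n ∧ Y j ω ∈ S n} := by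
  have hC (n : ℕ) : MeasurableSet[⨆ k ≥ m, mβ.comap (Y k)]
      {ω | ∃ j, m ≤ j ∧ j ≤ n ∧ Y j ω ∈ S n} := by
    have hunion :
        {ω | ∃ j, m ≤ j ∧ j ≤ n ∧ Y j ω ∈ S n} = ⋃ j ≥ m, ⋃ (_ : j ≤ n), Y j ⁻¹' S n := by
      ext
      simp only [mem_ofPred_eq, mem_iUnion, mem_preimage, exists_prop, ge_iff_le]
    rw [hunion]
    exact .iUnion fun j => .iUnion fun hj => .iUnion fun _ =>
      le_iSup₂ (f := fun k (_ : k ≥ m) => mβ.comap (Y k)) j hj _ ⟨S n, hS n, rfl⟩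
  have hliminf : {ω | ∀ᶠ n in atTop, ∃ j, m ≤ j ∧ j ≤ n ∧ Y j ω ∈ S n} =
      liminf (fun n => {ω | ∃ j, m ≤ j ∧ j ≤ n ∧ Y j ω ∈ S n}) atTop := by
    ext
    rw [mem_liminf_iff_eventually_mem]
    rfl
  rw [hliminf]
  exact @MeasurableSet.measurableSet_liminf _ (⨆ k ≥ m, mβ.comap (Y k)) _ hC

namespace ProbabilityTheory

variable {Ω : Type*} [MeasurableSpace Ω] {P : Measure Ω}

theorem cdf_map_apply [IsProbabilityMeasure P] {X : Ω → ℝ} (hX : Measurable X) (x : ℝ) :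
    cdf (P.map X) x = (P {ω | X ω ≤ x}).toReal := by
  have := Measure.isProbabilityMeasure_map (μ := P) hX.aemeasurable
  rw [cdf_eq_real, measureReal_def, Measure.map_apply hX measurableSet_Iic]
  rfl

theorem ae_cdf_lt_one (μ : Measure ℝ) [IsProbabilityMeasure μ]
    (h : ∀ x, cdf μ x = 1 → Function.leftLim (cdf μ) x = 1) : ∀ᵐ x ∂μ, cdf μ x < 1 := by
  simp_rw [(cdf_le_one μ _).lt_iff_ne]
  set t := {x | cdf μ x = 1}
  rcases t.eq_empty_or_nonempty with ht | ht
  · exact ae_of_all _ fun x hx => ht.subset hx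
  obtain ⟨c, hc⟩ := ((tendsto_cdf_atBot μ).eventually (gt_mem_nhds zero_lt_one)).exists
  have hbdd : BddBelow t := ⟨c, fun x (hx : cdf μ x = 1) => le_of_not_gt fun hxc => by
    linarith [(cdf μ).mono hxc.le]⟩
  have hx₀ : cdf μ (sInf t) = 1 := by
    by_contra hne
    obtain ⟨q, hxq, hq⟩ := (cdf μ).exists_rat_gt_lt ((cdf_le_one μ _).lt_of_ne hne)
    obtain ⟨s, hs : cdf μ s = 1, hsq⟩ := exists_lt_of_csInf_lt ht hxq
    linarith [(cdf μ).mono hsq.le]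
  have hIci : μ (Ici (sInf t)) = 0 := by
    rw [← measure_cdf μ, (cdf μ).measure_Ici (tendsto_cdf_atTop μ), h _ hx₀, sub_self,
      ENNReal.ofReal_zero]
  rw [ae_iff]
  simp only [not_not]
  exact measure_mono_null (fun x hx => csInf_le hbdd hx) hIci

theorem iIndepFun.measure_forall_mem_eq_zero {β : Type*} [MeasurableSpace β] {Y : ℕ → Ω → β}
    (hY : ∀ n, Measurable (Y n)) (hindep : iIndepFun Y P)
    (hident : ∀ n, P.map (Y n) = P.map (Y 0)) {s : Set β} (hs : MeasurableSet s)
    (hs1 : P (Y 0 ⁻¹' s) < 1) : P {ω | ∀ n, Y n ω ∈ s} = 0 := by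
  have hpow (n : ℕ) : P {ω | ∀ n, Y n ω ∈ s} ≤ P (Y 0 ⁻¹' s) ^ n := calc
    _ ≤ P (⋂ j ∈ Finset.range n, Y j ⁻¹' s) :=
      measure_mono fun ω (hω : ∀ n, Y n ω ∈ s) => mem_iInter₂.2 fun j _ => hω j
    _ = ∏ j ∈ Finset.range n, P (Y j ⁻¹' s) :=
      hindep.measure_inter_preimage_eq_mul _ fun _ _ => hs
    _ = P (Y 0 ⁻¹' s) ^ n := by
      rw [Finset.prod_congr rfl fun j _ => by
        rw [← Measure.map_apply (hY j) hs, hident j, Measure.map_apply (hY 0) hs],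
        Finset.prod_const, Finset.card_range]
  exact le_antisymm (ge_of_tendsto' (ENNReal.tendsto_pow_atTop_nhds_zero_of_lt_one hs1) hpow)
    bot_le

theorem iIndepFun.ae_forall_exists_lt [IsProbabilityMeasure P] {Y : ℕ → Ω → ℝ}
    (hY : ∀ n, Measurable (Y n)) (hindep : iIndepFun Y P)
    (hident : ∀ n, P.map (Y n) = P.map (Y 0))
    (hnoatom : ∀ x, cdf (P.map (Y 0)) x = 1 → Function.leftLim (cdf (P.map (Y 0))) x = 1) :
    ∀ᵐ ω ∂P, ∀ k, ∃ j, Y k ω < Y j ω := by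
  have := Measure.isProbabilityMeasure_map (μ := P) (hY 0).aemeasurable
  have hcdf (k : ℕ) : ∀ᵐ ω ∂P, cdf (P.map (Y 0)) (Y k ω) < 1 :=
    ae_of_ae_map (hY k).aemeasurable (by rw [hident k]; exact ae_cdf_lt_one _ hnoatom)
  have hunbdd (q : ℚ) : ∀ᵐ ω ∂P, cdf (P.map (Y 0)) q < 1 → ∃ j, (q : ℝ) < Y j ω := by
    by_cases hq : cdf (P.map (Y 0)) q < 1
    · have hq' : P (Y 0 ⁻¹' Iic (q : ℝ)) < 1 := prob_le_one.lt_of_ne fun h => hq.ne <| by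
        rw [cdf_map_apply (hY 0)]
        exact (congrArg ENNReal.toReal h).trans ENNReal.toReal_one
      filter_upwards [measure_eq_zero_iff_ae_notMem.1
        (hindep.measure_forall_mem_eq_zero hY hident measurableSet_Iic hq')] with ω hω _
      simpa using hω
    · exact ae_of_all _ fun _ h => absurd h hq
  filter_upwards [ae_all_iff.2 hcdf, ae_all_iff.2 hunbdd] with ω hF hq k
  obtain ⟨q, hkq, hq1⟩ := (cdf (P.map (Y 0))).exists_rat_gt_lt (hF k)
  obtain ⟨j, hj⟩ := hq q hq1
  exact ⟨j, hkq.trans hj⟩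

end ProbabilityTheory

/-- 0–1 law: for i.i.d. `Y n` whose distribution function `F` has no atom at its
essential supremum (no `x` with `F(x−) < F(x) = 1`) and a non-decreasing boundary
`b n`, the probability that eventually `M n > b n` is either 0 or 1. -/
theorem max_crossing_zero_one_law
    {Ω : Type*} [MeasurableSpace Ω] (P : Measure Ω) [IsProbabilityMeasure P]
    (F : ℝ → ℝ)
    (Y : ℕ → Ω → ℝ) (hY : ∀ n, Measurable (Y n))
    (hindep : iIndepFun Y P)
    (hident : ∀ n, P.map (Y n) = P.map (Y 0))
    (hdf : ∀ x, (P {ω | Y 0 ω ≤ x}).toReal = F x)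
    (hnoatom : ∀ x, F x = 1 → Function.leftLim F x = 1)
    (b : ℕ → ℝ) :
    P {ω | ∀ᶠ n in atTop,
        b n < (Finset.range (n + 1)).sup' (by simp) fun k => Y k ω} = 0 ∨
    P {ω | ∀ᶠ n in atTop,
        b n < (Finset.range (n + 1)).sup' (by simp) fun k => Y k ω} = 1 := by
  obtain rfl : ⇑(cdf (P.map (Y 0))) = F := funext fun x => (cdf_map_apply (hY 0) x).trans (hdf x)
  have hae : {ω | ∀ᶠ n in atTop, b n < (Finset.range (n + 1)).sup' (by simp) fun k => Y k ω}
      =ᵐ[P] ⋂ m, {ω | ∀ᶠ n in atTop, ∃ j, m ≤ j ∧ j ≤ n ∧ Y j ω ∈ Ioi (b n)} := by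
    refine eventuallyEq_set.2 ?_
    filter_upwards [hindep.ae_forall_exists_lt hY hident hnoatom] with ω hω
    rw [mem_iInter]
    exact Finset.eventually_lt_sup'_range_iff hω
  have hanti : Antitone fun m => {ω | ∀ᶠ n in atTop, ∃ j, m ≤ j ∧ j ≤ n ∧ Y j ω ∈ Ioi (b n)} :=
    fun m m' hmm' ω hω => hω.mono fun n ⟨j, hj, hjn, hjb⟩ => ⟨j, hmm'.trans hj, hjn, hjb⟩
  rw [measure_congr hae]
  exact measure_zero_or_one_of_measurableSet_limsup_atTop (fun n => (hY n).comap_le)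
    hindep.iIndep (MeasurableSpace.measurableSet_limsup_iInter_of_antitone hanti fun m =>
      MeasurableSpace.measurableSet_biSup_comap_eventually_exists_mem Y
        (fun _ => measurableSet_Ioi) m)
end

section
/- Let {Y_n}_{n≥1} be i.i.d. with distribution function F, M_n = max(Y_1,...,Y_n), and {b_n} non-decreasing with g_n = 1 − F(b_n) → 0. If liminf_{n→∞} n·g_n < ∞, then P(M_n > b_n eventually) < 1 (in fact, under the 0–1 law, it equals 0). -/
/-!
Let `A n` be the event that `Y 0, …, Y n` all lie below `b n`. Independence gives
`P (A n) = F (b n) ^ (n + 1) ≥ exp (-2 (n + 1) g n)` with `g n = 1 - F (b n)`, which is bounded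
away from `0` along the subsequence where `n g n` stays bounded, so `limsup A n` has positive
probability. Since `g n → 0`, each `Y k` is almost surely eventually below `b n`, so up to a null
set `limsup A n` does not depend on the first `m` variables for any `m`: it is a tail event, and
Kolmogorov's 0–1 law forces its probability to be `1`. The event in the theorem is its complement.
-/

open MeasureTheory ProbabilityTheory Filter Set
open scoped ENNReal

namespace Real

lemma exp_neg_two_mul_le_one_sub {x : ℝ} (h0 : 0 ≤ x) (h2 : x ≤ 1 / 2) :
    exp (-(2 * x)) ≤ 1 - x := by
  have h := add_one_le_exp (2 * x)
  have hinv : exp (-(2 * x)) * exp (2 * x) = 1 := by rw [← exp_add]; simp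
  nlinarith [exp_pos (-(2 * x))]

lemma exp_neg_two_mul_le_one_sub_pow {x : ℝ} (h0 : 0 ≤ x) (h2 : x ≤ 1 / 2) (n : ℕ) :
    exp (-(2 * n * x)) ≤ (1 - x) ^ n := by
  calc exp (-(2 * n * x)) = exp (-(2 * x)) ^ n := by rw [← exp_nat_mul]; ring_nf
    _ ≤ (1 - x) ^ n := pow_le_pow_left₀ (exp_nonneg _) (exp_neg_two_mul_le_one_sub h0 h2) n

end Real

lemma frequently_exp_le_pow {p : ℕ → ℝ} {C : ℝ} (hp : ∀ n, p n ≤ 1)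
    (hp1 : Tendsto (fun n => 1 - p n) atTop (nhds 0))
    (hC : ∃ᶠ n : ℕ in atTop, n * (1 - p n) ≤ C) :
    ∃ᶠ n in atTop, Real.exp (-(2 * C + 1)) ≤ p n ^ (n + 1) := by
  refine (hC.and_eventually (hp1.eventually_le_const (by norm_num : (0 : ℝ) < 1 / 2))).mono ?_
  rintro n ⟨hnC, hhalf⟩
  calc Real.exp (-(2 * C + 1)) ≤ Real.exp (-(2 * (n + 1 : ℕ) * (1 - p n))) := by
        gcongr; push_cast; linarith
    _ ≤ (1 - (1 - p n)) ^ (n + 1) :=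
        Real.exp_neg_two_mul_le_one_sub_pow (sub_nonneg.2 (hp n)) hhalf _
    _ = p n ^ (n + 1) := by rw [sub_sub_cancel]

namespace MeasureTheory

variable {α : Type*} [MeasurableSpace α] {μ : Measure α}

lemma le_measure_limsup_atTop [IsFiniteMeasure μ] {s : ℕ → Set α}
    (hs : ∀ n, MeasurableSet (s n)) {δ : ℝ≥0∞} (h : ∃ᶠ n in atTop, δ ≤ μ (s n)) :
    δ ≤ μ (limsup s atTop) := by
  have hanti : Antitone fun N => ⋃ n ≥ N, s n :=
    fun N M hNM => biUnion_mono (fun n hn => le_trans hNM hn) fun _ _ => subset_rfl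
  have hmeas N : MeasurableSet (⋃ n ≥ N, s n) := .biUnion (to_countable _) fun n _ => hs n
  simp only [limsup_eq_iInf_iSup_of_nat, iInf_eq_iInter, iSup_eq_iUnion]
  rw [hanti.measure_iInter (fun N => (hmeas N).nullMeasurableSet) ⟨0, measure_ne_top _ _⟩]
  refine le_iInf fun N => ?_
  obtain ⟨n, hn, hδ⟩ := frequently_atTop.1 h N
  exact hδ.trans (measure_mono (subset_biUnion_of_mem (u := s) hn))

lemma ae_eventually_le_of_tendsto_measure_lt {β : Type*} [LinearOrder β] {X : α → β}
    {b : ℕ → β} (hb : Monotone b) (h : Tendsto (fun n => μ {ω | b n < X ω}) atTop (nhds 0)) :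
    ∀ᵐ ω ∂μ, ∀ᶠ n in atTop, X ω ≤ b n := by
  rw [ae_iff]
  refine le_antisymm (ge_of_tendsto' h fun N => measure_mono fun ω hω => ?_) bot_le
  by_contra hle
  exact hω (eventually_atTop.2 ⟨N, fun n hn => (not_lt.1 hle).trans (hb hn)⟩)

end MeasureTheory

namespace ProbabilityTheory

variable {Ω β : Type*} {Y : ℕ → Ω → β} {S : ℕ → Set β}

def allMemFrom (Y : ℕ → Ω → β) (S : ℕ → Set β) (m n : ℕ) : Set Ω :=
  ⋂ k ∈ Finset.Ico m (n + 1), Y k ⁻¹' S n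

lemma allMemFrom_mono {m m' : ℕ} (h : m ≤ m') (n : ℕ) :
    allMemFrom Y S m n ⊆ allMemFrom Y S m' n :=
  biInter_subset_biInter_left fun _ hk =>
    Finset.mem_Ico.2 ⟨h.trans (Finset.mem_Ico.1 hk).1, (Finset.mem_Ico.1 hk).2⟩

lemma measurableSet_allMemFrom [MeasurableSpace Ω] [MeasurableSpace β]
    (hY : ∀ k, Measurable (Y k)) (hS : ∀ n, MeasurableSet (S n)) (m n : ℕ) :
    MeasurableSet (allMemFrom Y S m n) :=
  Finset.measurableSet_biInter _ fun k _ => hY k (hS n)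

lemma iIndepFun.measure_allMemFrom [MeasurableSpace Ω] [MeasurableSpace β] {P : Measure Ω}
    (hindep : iIndepFun Y P) (hident : ∀ k, IdentDistrib (Y k) (Y 0) P P)
    (hS : ∀ n, MeasurableSet (S n)) (m n : ℕ) :
    P (allMemFrom Y S m n) = P (Y 0 ⁻¹' S n) ^ (n + 1 - m) := by
  rw [allMemFrom, hindep.meas_biInter fun k _ => ⟨S n, hS n, rfl⟩,
    Finset.prod_congr rfl fun k _ => (hident k).measure_mem_eq (hS n), Finset.prod_const,
    Nat.card_Ico]

lemma measurableSet_limsup_allMemFrom [mβ : MeasurableSpace β] (hS : ∀ n, MeasurableSet (S n))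
    (m : ℕ) : MeasurableSet[⨆ k ≥ m, mβ.comap (Y k)] (limsup (allMemFrom Y S m) atTop) := by
  refine @MeasurableSet.measurableSet_limsup Ω (⨆ k ≥ m, mβ.comap (Y k)) _ fun n => ?_
  refine Finset.measurableSet_biInter _ fun k hk => ?_
  exact le_iSup₂ (f := fun k (_ : k ≥ m) => mβ.comap (Y k)) k (Finset.mem_Ico.1 hk).1 _
    ⟨S n, hS n, rfl⟩

lemma measurableSet_iUnion_limsup_allMemFrom [mβ : MeasurableSpace β]
    (hS : ∀ n, MeasurableSet (S n)) :
    MeasurableSet[limsup (fun k => mβ.comap (Y k)) atTop]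
      (⋃ m, limsup (allMemFrom Y S m) atTop) := by
  have hmono : Monotone fun m => limsup (allMemFrom Y S m) atTop :=
    fun m m' h => limsup_le_limsup (Eventually.of_forall fun n => allMemFrom_mono h n)
  rw [limsup_eq_iInf_iSup_of_nat, MeasurableSpace.measurableSet_iInf]
  intro N
  rw [← hmono.iUnion_nat_add N]
  exact .iUnion fun m => biSup_mono (f := fun k => mβ.comap (Y k))
    (fun k hk => (Nat.le_add_left N m).trans hk) _ (measurableSet_limsup_allMemFrom hS (m + N))

lemma iUnion_limsup_allMemFrom_ae_le [MeasurableSpace Ω] {P : Measure Ω}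
    (hev : ∀ k, ∀ᵐ ω ∂P, ∀ᶠ n in atTop, Y k ω ∈ S n) :
    (⋃ m, limsup (allMemFrom Y S m) atTop : Set Ω) ≤ᵐ[P]
      (limsup (allMemFrom Y S 0) atTop : Set Ω) := by
  filter_upwards [ae_all_iff.2 hev] with ω hω hmem
  obtain ⟨m, hm⟩ := mem_iUnion.1 hmem
  rw [mem_limsup_iff_frequently_mem] at hm
  refine mem_limsup_iff_frequently_mem.2 ?_
  have hinit : ∀ᶠ n in atTop, ∀ k ∈ Finset.range m, Y k ω ∈ S n :=
    (Finset.eventually_all _).2 fun k _ => hω k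
  refine (hm.and_eventually hinit).mono fun n ⟨hfrom, hbelow⟩ => ?_
  simp only [allMemFrom, mem_iInter₂, mem_preimage, Finset.mem_Ico, Finset.mem_range]
    at hfrom hbelow ⊢
  intro k hk
  rcases lt_or_ge k m with hkm | hkm
  · exact hbelow k hkm
  · exact hfrom k ⟨hkm, hk.2⟩

theorem measure_limsup_allMemFrom_eq_zero_or_one [MeasurableSpace Ω] [MeasurableSpace β]
    {P : Measure Ω} [IsProbabilityMeasure P]
    (hY : ∀ n, Measurable (Y n)) (hindep : iIndepFun Y P) (hS : ∀ n, MeasurableSet (S n))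
    (hev : ∀ k, ∀ᵐ ω ∂P, ∀ᶠ n in atTop, Y k ω ∈ S n) :
    P (limsup (allMemFrom Y S 0) atTop) = 0 ∨ P (limsup (allMemFrom Y S 0) atTop) = 1 := by
  have htail := measure_zero_or_one_of_measurableSet_limsup_atTop (fun k => (hY k).comap_le)
    hindep.iIndep (measurableSet_iUnion_limsup_allMemFrom hS)
  have hle := measure_mono_ae (iUnion_limsup_allMemFrom_ae_le hev)
  have hge : P (limsup (allMemFrom Y S 0) atTop) ≤ P (⋃ m, limsup (allMemFrom Y S m) atTop) :=
    measure_mono (subset_iUnion (fun m => limsup (allMemFrom Y S m) atTop) 0)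
  rcases htail with h | h
  · exact .inl (le_antisymm (h ▸ hge) bot_le)
  · exact .inr (le_antisymm prob_le_one (h ▸ hle))

lemma setOf_eventually_lt_sup'_eq_compl_limsup_allMemFrom [LinearOrder β] (Y : ℕ → Ω → β)
    (b : ℕ → β) :
    {ω | ∀ᶠ n in atTop, b n < (Finset.range (n + 1)).sup' (by simp) fun k => Y k ω} =
      (limsup (allMemFrom Y (fun n => Iic (b n)) 0) atTop)ᶜ := by
  ext ω
  simp [allMemFrom, mem_limsup_iff_frequently_mem, Finset.lt_sup'_iff]

end ProbabilityTheory

/-- If `g n = 1 − F (b n) → 0` and `liminf n·g n < ∞` (i.e. `n·g n` is bounded along a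
subsequence), then the probability that eventually `M n > b n` is 0. -/
theorem max_crossing_prob_zero
    {Ω : Type*} [MeasurableSpace Ω] (P : Measure Ω) [IsProbabilityMeasure P]
    (F : ℝ → ℝ)
    (Y : ℕ → Ω → ℝ) (hY : ∀ n, Measurable (Y n))
    (hindep : iIndepFun Y P)
    (hident : ∀ n, P.map (Y n) = P.map (Y 0))
    (hdf : ∀ x, (P {ω | Y 0 ω ≤ x}).toReal = F x)
    (b : ℕ → ℝ) (hb : Monotone b)
    (hg0 : Tendsto (fun n => 1 - F (b n)) atTop (nhds 0))
    (hliminf : ∃ C : ℝ, ∃ᶠ n : ℕ in atTop, (n : ℝ) * (1 - F (b n)) ≤ C) :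
    P {ω | ∀ᶠ n in atTop,
        b n < (Finset.range (n + 1)).sup' (by simp) fun k => Y k ω} = 0 := by
  obtain ⟨C, hC⟩ := hliminf
  have hid k : IdentDistrib (Y k) (Y 0) P P := ⟨(hY k).aemeasurable, (hY 0).aemeasurable, hident k⟩
  have hcdf x : P (Y 0 ⁻¹' Iic x) = ENNReal.ofReal (F x) := by
    rw [← hdf, ENNReal.ofReal_toReal (measure_ne_top _ _)]; rfl
  have hF x : 0 ≤ F x ∧ F x ≤ 1 := hdf x ▸ ⟨ENNReal.toReal_nonneg, measureReal_le_one⟩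
  have hS n : MeasurableSet (Iic (b n)) := measurableSet_Iic
  have hpos : 0 < P (limsup (allMemFrom Y (fun n => Iic (b n)) 0) atTop) :=
    (ENNReal.ofReal_pos.2 (Real.exp_pos _)).trans_le <|
      le_measure_limsup_atTop (measurableSet_allMemFrom hY hS 0) <|
      (frequently_exp_le_pow (fun n => (hF _).2) hg0 hC).mono fun n hn => by
        rw [hindep.measure_allMemFrom hid hS, hcdf, Nat.sub_zero, ← ENNReal.ofReal_pow (hF _).1]
        exact ENNReal.ofReal_le_ofReal hn
  have hexceed k n : P {ω | b n < Y k ω} = ENNReal.ofReal (1 - F (b n)) := by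
    rw [ENNReal.ofReal_sub _ (hF _).1, ENNReal.ofReal_one, ← hcdf,
      ← prob_compl_eq_one_sub (hY 0 measurableSet_Iic), ← preimage_compl, compl_Iic,
      ← (hid k).measure_mem_eq measurableSet_Ioi]
    rfl
  have hev k : ∀ᵐ ω ∂P, ∀ᶠ n in atTop, Y k ω ≤ b n :=
    ae_eventually_le_of_tendsto_measure_lt hb <| by
      simpa only [hexceed, ENNReal.ofReal_zero] using ENNReal.tendsto_ofReal hg0
  rw [setOf_eventually_lt_sup'_eq_compl_limsup_allMemFrom,
    prob_compl_eq_zero_iff (MeasurableSet.measurableSet_limsup (measurableSet_allMemFrom hY hS 0))]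
  exact (measure_limsup_allMemFrom_eq_zero_or_one hY hindep hS hev).resolve_left hpos.ne'
end

section
/- Let g : (0,∞) → (0,1] be non-increasing with g_t → 0 and t·g_t → ∞ as t → ∞. Then the integral J = ∫_0^∞ g_t e^{−t g_t} dt and the sum Σ = Σ_{n≥1} g_n e^{−n g_n} converge or diverge simultaneously. -/
open MeasureTheory Filter Set

lemma xexp_anti {a x y : ℝ} (hx : 0 < x) (hax : 1 ≤ a * x) (hxy : x ≤ y) :
    y * Real.exp (-(a * y)) ≤ x * Real.exp (-(a * x)) := by
  have h2 : 1 + a * (y - x) ≤ Real.exp (a * (y - x)) := by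
    have := Real.add_one_le_exp (a * (y - x)); linarith
  have h1 : y ≤ x * (1 + a * (y - x)) := by nlinarith
  have h3 : y ≤ x * Real.exp (a * (y - x)) := by
    calc y ≤ x * (1 + a * (y - x)) := h1
    _ ≤ x * Real.exp (a * (y - x)) := by nlinarith
  calc y * Real.exp (-(a * y)) ≤ (x * Real.exp (a * (y - x))) * Real.exp (-(a * y)) :=
        mul_le_mul_of_nonneg_right h3 (Real.exp_pos _).le
  _ = x * Real.exp (-(a * x)) := by
      rw [mul_assoc, ← Real.exp_add]; ring_nf


/-- For a non-increasing `g : (0,∞) → (0,1]` with `g t → 0` and `t·g t → ∞`,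
the integral `∫_0^∞ g t e^{−t g t} dt` and the series `Σ_{n ≥ 1} g n e^{−n g n}`
converge or diverge simultaneously. -/
theorem integral_sum_converge_simultaneously
    (g : ℝ → ℝ) (hganti : AntitoneOn g (Set.Ioi 0))
    (hgpos : ∀ t : ℝ, 0 < t → 0 < g t) (hgle : ∀ t : ℝ, 0 < t → g t ≤ 1)
    (hg0 : Tendsto g atTop (nhds 0))
    (hginf : Tendsto (fun t => t * g t) atTop atTop) :
    IntegrableOn (fun t => g t * Real.exp (-(t * g t))) (Set.Ioi 0) ↔
      Summable (fun n : ℕ =>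
        g ((n : ℝ) + 1) * Real.exp (-(((n : ℝ) + 1) * g ((n : ℝ) + 1)))) := by
  set f : ℝ → ℝ := fun t => g t * Real.exp (-(t * g t)) with hf
  set a : ℕ → ℝ := fun n => g ((n : ℝ) + 1) * Real.exp (-(((n : ℝ) + 1) * g ((n : ℝ) + 1)))
    with ha
  -- basic positivity facts
  have hfpos : ∀ t : ℝ, 0 < t → 0 < f t := fun t ht =>
    mul_pos (hgpos t ht) (Real.exp_pos _)
  have hfle : ∀ t : ℝ, 0 < t → f t ≤ 1 := by
    intro t ht
    have h1 := hgpos t ht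
    have h2 := hgle t ht
    have h3 : Real.exp (-(t * g t)) ≤ 1 := by
      rw [Real.exp_le_one_iff]; nlinarith
    calc f t ≤ g t * 1 := mul_le_mul_of_nonneg_left h3 h1.le
    _ ≤ 1 := by linarith
  have hanonneg : ∀ n : ℕ, 0 ≤ a n := by
    intro n
    have : (0:ℝ) < (n:ℝ) + 1 := by positivity
    exact (mul_pos (hgpos _ this) (Real.exp_pos _)).le
  -- threshold
  obtain ⟨T, hT⟩ := (hginf.eventually_ge_atTop 2).exists_forall_of_atTop
  set N : ℕ := max 1 ⌈T⌉₊ with hNdef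
  have hN1 : 1 ≤ N := le_max_left _ _
  have hNpos : (0:ℝ) < (N:ℝ) := by exact_mod_cast Nat.lt_of_lt_of_le Nat.zero_lt_one hN1
  have hN : ∀ t : ℝ, (N : ℝ) ≤ t → 2 ≤ t * g t := by
    intro t ht
    exact hT t (le_trans (le_trans (Nat.le_ceil T) (by exact_mod_cast le_max_right 1 ⌈T⌉₊)) ht)
  -- measurability
  have meas : AEStronglyMeasurable f (volume.restrict (Ioi (0:ℝ))) := by
    have hg : AEMeasurable g (volume.restrict (Ioi (0:ℝ))) :=
      aemeasurable_restrict_of_antitoneOn measurableSet_Ioi hganti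
    exact (hg.mul ((Real.measurable_exp.comp_aemeasurable
      ((aemeasurable_id.mul hg).neg)))).aestronglyMeasurable
  -- integrability of f on Ioc c d for 0 ≤ c
  have hIoc : ∀ c d : ℝ, 0 ≤ c → IntegrableOn f (Ioc c d) := by
    intro c d hc
    have hsub : Ioc c d ⊆ Ioi (0:ℝ) := fun x hx => lt_of_le_of_lt hc hx.1
    refine ⟨meas.mono_measure (Measure.restrict_mono hsub le_rfl),
      HasFiniteIntegral.restrict_of_bounded (C := 1) measure_Ioc_lt_top ?_⟩
    refine (ae_restrict_iff' measurableSet_Ioc).mpr (ae_of_all _ fun x hx => ?_)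
    have hx0 : 0 < x := lt_of_le_of_lt hc hx.1
    rw [Real.norm_of_nonneg (hfpos x hx0).le]
    exact hfle x hx0
  have hII : ∀ c d : ℝ, 0 ≤ c → c ≤ d → IntervalIntegrable f volume c d := by
    intro c d hc hcd
    exact (intervalIntegrable_iff_integrableOn_Ioc_of_le hcd).mpr (hIoc c d hc)
  -- upper pointwise bound
  have hupper : ∀ n : ℕ, N ≤ n → ∀ t ∈ Icc ((n:ℝ)) ((n:ℝ)+1),
      f t ≤ Real.exp 1 * a n := by
    intro n hn t ht
    have hn1 : (1:ℝ) ≤ (n:ℝ) := by exact_mod_cast le_trans hN1 hn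
    have htpos : 0 < t := lt_of_lt_of_le (by linarith) ht.1
    have hn1pos : (0:ℝ) < (n:ℝ) + 1 := by linarith
    have hgt := hgpos t htpos
    have hgn1 := hgpos _ hn1pos
    have h1 : g ((n:ℝ)+1) ≤ g t := hganti htpos hn1pos ht.2
    have h2 : 2 ≤ ((n:ℝ)+1) * g ((n:ℝ)+1) := by
      refine hN _ ?_
      have hNn : (N:ℝ) ≤ (n:ℝ) := by exact_mod_cast hn
      linarith
    have h3 : 1 ≤ (n:ℝ) * g ((n:ℝ)+1) := by
      have h4 := hgle _ hn1pos
      nlinarith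
    have key : g t * Real.exp (-((n:ℝ) * g t)) ≤
        g ((n:ℝ)+1) * Real.exp (-((n:ℝ) * g ((n:ℝ)+1))) := xexp_anti hgn1 h3 h1
    have step1 : f t ≤ g t * Real.exp (-((n:ℝ) * g t)) := by
      refine mul_le_mul_of_nonneg_left (Real.exp_le_exp.mpr ?_) hgt.le
      nlinarith [ht.1]
    have step3 : g ((n:ℝ)+1) * Real.exp (-((n:ℝ) * g ((n:ℝ)+1))) =
        a n * Real.exp (g ((n:ℝ)+1)) := by
      rw [ha]; rw [mul_assoc, ← Real.exp_add]; ring_nf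
    have step4 : a n * Real.exp (g ((n:ℝ)+1)) ≤ a n * Real.exp 1 :=
      mul_le_mul_of_nonneg_left (Real.exp_le_exp.mpr (hgle _ hn1pos)) (hanonneg n)
    calc f t ≤ g t * Real.exp (-((n:ℝ) * g t)) := step1
    _ ≤ g ((n:ℝ)+1) * Real.exp (-((n:ℝ) * g ((n:ℝ)+1))) := key
    _ = a n * Real.exp (g ((n:ℝ)+1)) := step3
    _ ≤ a n * Real.exp 1 := step4
    _ = Real.exp 1 * a n := mul_comm _ _
  -- lower pointwise bound
  have hlower : ∀ n : ℕ, N ≤ n → ∀ t ∈ Icc ((n:ℝ)+1) ((n:ℝ)+2),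
      Real.exp (-1) * a n ≤ f t := by
    intro n hn t ht
    have hn1 : (1:ℝ) ≤ (n:ℝ) := by exact_mod_cast le_trans hN1 hn
    have hNn : (N:ℝ) ≤ (n:ℝ) := by exact_mod_cast hn
    have htpos : 0 < t := lt_of_lt_of_le (by linarith) ht.1
    have hn1pos : (0:ℝ) < (n:ℝ) + 1 := by linarith
    have hn2pos : (0:ℝ) < (n:ℝ) + 2 := by linarith
    have hgt := hgpos t htpos
    have hgn1 := hgpos _ hn1pos
    have h1 : g t ≤ g ((n:ℝ)+1) := hganti hn1pos htpos ht.1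
    have h2 : g ((n:ℝ)+2) ≤ g t := hganti htpos hn2pos ht.2
    have h3 : 2 ≤ ((n:ℝ)+2) * g ((n:ℝ)+2) := hN _ (by linarith)
    have h4 : 1 ≤ ((n:ℝ)+2) * g t := by nlinarith
    have key : g ((n:ℝ)+1) * Real.exp (-(((n:ℝ)+2) * g ((n:ℝ)+1))) ≤
        g t * Real.exp (-(((n:ℝ)+2) * g t)) := xexp_anti hgt h4 h1
    have step1 : g t * Real.exp (-(((n:ℝ)+2) * g t)) ≤ f t := by
      refine mul_le_mul_of_nonneg_left (Real.exp_le_exp.mpr ?_) hgt.le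
      nlinarith [ht.2]
    have step3 : g ((n:ℝ)+1) * Real.exp (-(((n:ℝ)+2) * g ((n:ℝ)+1))) =
        a n * Real.exp (-(g ((n:ℝ)+1))) := by
      rw [ha]; rw [mul_assoc, ← Real.exp_add]; ring_nf
    have step4 : a n * Real.exp (-1) ≤ a n * Real.exp (-(g ((n:ℝ)+1))) := by
      refine mul_le_mul_of_nonneg_left (Real.exp_le_exp.mpr ?_) (hanonneg n)
      have := hgle _ hn1pos; linarith
    calc Real.exp (-1) * a n = a n * Real.exp (-1) := mul_comm _ _
    _ ≤ a n * Real.exp (-(g ((n:ℝ)+1))) := step4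
    _ = g ((n:ℝ)+1) * Real.exp (-(((n:ℝ)+2) * g ((n:ℝ)+1))) := step3.symm
    _ ≤ g t * Real.exp (-(((n:ℝ)+2) * g t)) := key
    _ ≤ f t := step1
  constructor
  · -- integrable → summable
    intro hInt
    rw [← summable_nat_add_iff N]
    refine summable_of_sum_range_le (c := Real.exp 1 * ∫ t in Ioi (0:ℝ), f t)
      (fun n => hanonneg _) ?_
    intro k
    set u : ℕ → ℝ := fun i => (N:ℝ) + 1 + i with hu
    have huval : ∀ i : ℕ, u i = (N:ℝ) + 1 + i := fun i => rfl
    have hterm : ∀ i : ℕ, a (i + N) ≤ Real.exp 1 * ∫ t in u i..u (i+1), f t := by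
      intro i
      have hui : u i = (((i + N : ℕ)):ℝ) + 1 := by rw [huval]; push_cast; ring
      have hui1 : u (i+1) = (((i + N : ℕ)):ℝ) + 2 := by rw [huval]; push_cast; ring
      have hle : u i ≤ u (i+1) := by rw [hui, hui1]; linarith
      have h0 : (0:ℝ) ≤ u i := by rw [hui]; positivity
      have hconst : ∫ _t in u i..u (i+1), (Real.exp (-1) * a (i+N)) =
          Real.exp (-1) * a (i+N) := by
        rw [intervalIntegral.integral_const]
        have hlen : u (i+1) - u i = 1 := by rw [hui, hui1]; ring
        rw [hlen, one_smul]
      have hmono : Real.exp (-1) * a (i+N) ≤ ∫ t in u i..u (i+1), f t := by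
        rw [← hconst]
        refine intervalIntegral.integral_mono_on hle intervalIntegrable_const
          (hII _ _ h0 hle) ?_
        intro t ht
        rw [hui, hui1] at ht
        exact hlower (i+N) (Nat.le_add_left N i) t ht
      calc a (i+N) = Real.exp 1 * (Real.exp (-1) * a (i+N)) := by
            rw [← mul_assoc, ← Real.exp_add]; norm_num
      _ ≤ Real.exp 1 * ∫ t in u i..u (i+1), f t :=
            mul_le_mul_of_nonneg_left hmono (Real.exp_pos 1).le
    have hadj : ∑ i ∈ Finset.range k, ∫ t in u i..u (i+1), f t =
        ∫ t in (u 0)..(u k), f t := by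
      refine intervalIntegral.sum_integral_adjacent_intervals fun i _ => ?_
      refine hII _ _ ?_ ?_ <;> simp only [huval] <;> push_cast <;>
        [positivity; linarith]
    have htail : ∫ t in (u 0)..(u k), f t ≤ ∫ t in Ioi (0:ℝ), f t := by
      have h0k : u 0 ≤ u k := by simp only [huval]; push_cast; linarith [Nat.cast_nonneg (α := ℝ) k]
      rw [intervalIntegral.integral_of_le h0k]
      refine setIntegral_mono_set hInt ?_ ?_
      · exact (ae_restrict_iff' measurableSet_Ioi).mpr
          (ae_of_all _ fun x hx => (hfpos x hx).le)
      · refine HasSubset.Subset.eventuallyLE fun x hx => ?_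
        have : (0:ℝ) < u 0 := by rw [huval]; push_cast; linarith
        exact lt_trans this hx.1
    calc ∑ i ∈ Finset.range k, a (i + N)
        ≤ ∑ i ∈ Finset.range k, Real.exp 1 * ∫ t in u i..u (i+1), f t :=
          Finset.sum_le_sum fun i _ => hterm i
    _ = Real.exp 1 * ∫ t in (u 0)..(u k), f t := by rw [← Finset.mul_sum, hadj]
    _ ≤ Real.exp 1 * ∫ t in Ioi (0:ℝ), f t :=
          mul_le_mul_of_nonneg_left htail (Real.exp_pos 1).le
  · -- summable → integrable
    intro hSum
    have hSum' : Summable (fun i : ℕ => a (N + i)) := by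
      have := (summable_nat_add_iff N).mpr hSum
      simpa [add_comm] using this
    have htsum_le : ∑' i : ℕ, a (N + i) ≤ ∑' n, a n :=
      Summable.tsum_le_tsum_of_inj (fun i => N + i) (add_right_injective N)
        (fun c _ => hanonneg c) (fun i => le_rfl) hSum' hSum
    have hIoi : IntegrableOn f (Ioi ((N:ℝ))) := by
      refine integrableOn_Ioi_of_intervalIntegral_norm_bounded
        (Real.exp 1 * ∑' n, a n) (N:ℝ) (b := fun k : ℕ => (N:ℝ) + k) (l := atTop)
        (fun k => hIoc _ _ hNpos.le) ?_ ?_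
      · exact tendsto_atTop_add_const_left atTop _ tendsto_natCast_atTop_atTop
      refine Eventually.of_forall fun k => ?_
      have hNk : (N:ℝ) ≤ (N:ℝ) + k := by linarith [Nat.cast_nonneg (α := ℝ) k]
      have hEq : (∫ x in (N:ℝ)..((N:ℝ)+k), ‖f x‖) = ∫ x in (N:ℝ)..((N:ℝ)+k), f x := by
        refine intervalIntegral.integral_congr fun t ht => ?_
        rw [uIcc_of_le hNk] at ht
        exact Real.norm_of_nonneg (hfpos t (lt_of_lt_of_le hNpos ht.1)).le
      rw [hEq]
      set u : ℕ → ℝ := fun i => (N:ℝ) + i with hu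
      have huval : ∀ i : ℕ, u i = (N:ℝ) + i := fun i => rfl
      have hadj : ∑ i ∈ Finset.range k, ∫ t in u i..u (i+1), f t =
          ∫ t in (u 0)..(u k), f t := by
        refine intervalIntegral.sum_integral_adjacent_intervals fun i _ => ?_
        refine hII _ _ ?_ ?_ <;> simp only [huval] <;> push_cast <;>
          [positivity; linarith]
      have hu0 : u 0 = (N:ℝ) := by rw [huval]; push_cast; ring
      have huk : u k = (N:ℝ) + k := rfl
      rw [← huk, ← hu0, ← hadj]
      have hterm : ∀ i : ℕ, (∫ t in u i..u (i+1), f t) ≤ Real.exp 1 * a (N + i) := by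
        intro i
        have hui : u i = (((N + i : ℕ)):ℝ) := by rw [huval]; push_cast; ring
        have hui1 : u (i+1) = (((N + i : ℕ)):ℝ) + 1 := by rw [huval]; push_cast; ring
        have hle : u i ≤ u (i+1) := by rw [hui, hui1]; linarith
        have h0 : (0:ℝ) ≤ u i := by rw [hui]; positivity
        have hconst : ∫ _t in u i..u (i+1), (Real.exp 1 * a (N+i)) =
            Real.exp 1 * a (N+i) := by
          rw [intervalIntegral.integral_const]
          have hlen : u (i+1) - u i = 1 := by rw [hui, hui1]; ring
          rw [hlen, one_smul]
        rw [← hconst]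
        refine intervalIntegral.integral_mono_on hle (hII _ _ h0 hle)
          intervalIntegrable_const ?_
        intro t ht
        rw [hui, hui1] at ht
        exact hupper (N+i) (Nat.le_add_right N i) t ht
      calc ∑ i ∈ Finset.range k, ∫ t in u i..u (i+1), f t
          ≤ ∑ i ∈ Finset.range k, Real.exp 1 * a (N + i) :=
            Finset.sum_le_sum fun i _ => hterm i
      _ = Real.exp 1 * ∑ i ∈ Finset.range k, a (N + i) := by rw [Finset.mul_sum]
      _ ≤ Real.exp 1 * ∑' i : ℕ, a (N + i) :=
            mul_le_mul_of_nonneg_left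
              (Summable.sum_le_tsum _ (fun i _ => hanonneg _) hSum') (Real.exp_pos 1).le
      _ ≤ Real.exp 1 * ∑' n, a n :=
            mul_le_mul_of_nonneg_left htsum_le (Real.exp_pos 1).le
    have := (hIoc 0 (N:ℝ) le_rfl).union hIoi
    rwa [Ioc_union_Ioi_eq_Ioi hNpos.le] at this
end
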